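/- arXiv:1710.08766 — 7 statements merged into one kernel-verified Lean document; each statement's English description precedes it below -/
import Mathlib

section
/- Uniform Nash–Williams theorem: Let B be a front on ℕ. There is a Borel map S : 2^B × [ℕ]^ω → [ℕ]^ω such that for every F ⊆ B and every infinite x ⊆ ℕ, S(F,x) is an infinite subset of x which is homogeneous for F, i.e. either every finite subset of S(F,x) belonging to B belongs to F, or no finite subset of S(F,x) belongs to F. -/
open Set

/-- The Cantor space `2^ℕ`: subsets of `ℕ` identified with their characteristic functions. -/
abbrev Cantor : Type := ℕ → Bool

/-- The subset of `ℕ` coded by a point of Cantor space. -/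
def toSet (x : Cantor) : Set ℕ := {n | x n = true}

/-- `s ⊑ z` : the finite set `s` is an initial segment of `z ⊆ ℕ`,
i.e. `s = z ∩ {0,1,…,n}` for some `n`. -/
def InitSeg (s : Finset ℕ) (z : Set ℕ) : Prop := ∃ n : ℕ, (s : Set ℕ) = z ∩ Set.Iic n

/-- `s ⊑ t` for finite sets `s, t`. -/
def InitSegF (s t : Finset ℕ) : Prop := ∃ n : ℕ, s = t ∩ Finset.Iic n

/-- `B` is a front on the set `x ⊆ ℕ`: all members of `B` are subsets of `x`, any two
members of `B` are `⊑`-incomparable, and every infinite subset of `x` has an initial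
segment in `B`. -/
def IsFrontOn (B : Set (Finset ℕ)) (x : Set ℕ) : Prop :=
  (∀ s ∈ B, (s : Set ℕ) ⊆ x) ∧
  (∀ s ∈ B, ∀ t ∈ B, InitSegF s t → s = t) ∧
  (∀ y : Set ℕ, y ⊆ x → y.Infinite → ∃ s ∈ B, InitSeg s y)

/-- `y` is `F`-homogeneous: either every infinite subset of `y` has an initial segment
in `F`, or no finite subset of `y` belongs to `F`. -/
def Homog (F : Set (Finset ℕ)) (y : Set ℕ) : Prop :=
  (∀ z : Set ℕ, z ⊆ y → z.Infinite → ∃ s ∈ F, InitSeg s z) ∨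
  (∀ s : Finset ℕ, (s : Set ℕ) ⊆ y → s ∉ F)

/-- `I` is an ideal on `ℕ`: a family of subsets of `ℕ` closed under taking subsets
and under finite unions. -/
def IsIdeal (I : Set Cantor) : Prop :=
  (∀ x ∈ I, ∀ y : Cantor, toSet y ⊆ toSet x → y ∈ I) ∧
  (∀ x ∈ I, ∀ y ∈ I, (fun n => x n || y n) ∈ I)

/-- `I` is an `Fσ` subset of the Cantor space. -/
def IsFsigma (I : Set Cantor) : Prop :=
  ∃ C : ℕ → Set Cantor, (∀ n, IsClosed (C n)) ∧ I = ⋃ n, C n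

/-- A family `C` is tall if every infinite subset of `ℕ` contains an infinite member of `C`. -/
def Tall (C : Set Cantor) : Prop :=
  ∀ x : Cantor, (toSet x).Infinite → ∃ y ∈ C, (toSet y).Infinite ∧ toSet y ⊆ toSet x

/-- `S` is a Borel selector for the family `C`. -/
def IsSelector (C : Set Cantor) (S : Cantor → Cantor) : Prop :=
  Measurable S ∧ ∀ x : Cantor,
    toSet (S x) ⊆ toSet x ∧ ((toSet x).Infinite → (toSet (S x)).Infinite) ∧ S x ∈ C

/-- A Borel ideal `I` is uniformly selective. -/
def UnifSelective (I : Set Cantor) : Prop :=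
  ∃ F : (ℕ → Cantor) → Cantor, Measurable F ∧
    ∀ xs : ℕ → Cantor, (∀ n, xs n ∉ I) → (∀ n, toSet (xs (n + 1)) ⊆ toSet (xs n)) →
      F xs ∉ I ∧ ∀ n ∈ toSet (F xs), toSet (F xs) \ Set.Iic n ⊆ toSet (xs n)

/-- A Borel ideal `I` is uniformly `p⁺`. -/
def UnifPplus (I : Set Cantor) : Prop :=
  ∃ G : (ℕ → Cantor) → Cantor, Measurable G ∧
    ∀ xs : ℕ → Cantor, (∀ n, xs n ∉ I) → (∀ n, toSet (xs (n + 1)) ⊆ toSet (xs n)) →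
      G xs ∉ I ∧ ∀ n, (toSet (G xs) \ toSet (xs n)).Finite

/-- `(t n)_{n∈ℕ}` is a partition of `x` into finite sets. -/
def FinPartition (x : Cantor) (t : ℕ → Cantor) : Prop :=
  (∀ n, (toSet (t n)).Finite) ∧
  (∀ m n, m ≠ n → Disjoint (toSet (t m)) (toSet (t n))) ∧
  (⋃ n, toSet (t n)) = toSet x

/-- A Borel ideal `I` is uniformly `q⁺`. -/
def UnifQplus (I : Set Cantor) : Prop :=
  ∃ F : Cantor × (ℕ → Cantor) → Cantor, Measurable F ∧
    ∀ (x : Cantor) (t : ℕ → Cantor), x ∉ I → FinPartition x t →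
      toSet (F (x, t)) ⊆ toSet x ∧ F (x, t) ∉ I ∧
      ∀ n, (toSet (F (x, t)) ∩ toSet (t n)).Subsingleton

/-- The ideal `I` is `q⁺`. -/
def Qplus (I : Set Cantor) : Prop :=
  ∀ (x : Cantor) (t : ℕ → Cantor), x ∉ I → FinPartition x t →
    ∃ y : Cantor, toSet y ⊆ toSet x ∧ y ∉ I ∧
      ∀ n, (toSet y ∩ toSet (t n)).Subsingleton

/-- The ideal `I` is selective. -/
def Selective (I : Set Cantor) : Prop :=
  ∀ xs : ℕ → Cantor, (∀ n, xs n ∉ I) → (∀ n, toSet (xs (n + 1)) ⊆ toSet (xs n)) →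
    ∃ x : Cantor, x ∉ I ∧ ∀ n ∈ toSet x, toSet x \ Set.Iic n ⊆ toSet (xs n)

/-- The ideal generated by `K`: `x ∈ IdealGen K` iff `x ⊆ y₁ ∪ … ∪ y_n` for some
`y₁, …, y_n ∈ K`. -/
def IdealGen (K : Set Cantor) : Set Cantor :=
  {x | ∃ l : List Cantor, l ≠ [] ∧ (∀ y ∈ l, y ∈ K) ∧ toSet x ⊆ ⋃ y ∈ l, toSet y}

/-- `↓K = {x : x ⊆ y for some y ∈ K}`. -/
def Down (K : Set Cantor) : Set Cantor := {x | ∃ y ∈ K, toSet x ⊆ toSet y}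

/-- `C` is hereditary: closed under taking subsets. -/
def Hereditary (C : Set Cantor) : Prop :=
  ∀ x ∈ C, ∀ y : Cantor, toSet y ⊆ toSet x → y ∈ C

/-- `A ⊆ 2^ℕ` is `Σ¹₂`: the projection of a coanalytic subset of `2^ℕ × ℕ^ℕ`. -/
def Sigma12 (A : Set Cantor) : Prop :=
  ∃ C : Set (Cantor × (ℕ → ℕ)), MeasureTheory.AnalyticSet Cᶜ ∧
    A = {x | ∃ w : ℕ → ℕ, (x, w) ∈ C}

/-- `A ⊆ 2^ℕ` is `Π¹₂`: the complement of a `Σ¹₂` set. -/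
def Pi12 (A : Set Cantor) : Prop := Sigma12 Aᶜ

/-! The selector is built by recursion on the tree of `B`, which is well founded because `B` is a
front. At a node `s ∈ B` it returns `x` itself with colour `F s`. At an internal node `s` it fuses
the selectors of the children `s ∪ {m}`: starting from `X₀ = x`, with `n_k = min X_k`, the child
at `n_k` thins `X_k ∩ (n_k, ∞)` to `X_{k+1}`, homogeneous of colour `c_k`, and the output keeps the
`n_k` whose `c_k` is the colour taken infinitely often. A member of `B` above `s` inside the output
is decided at the stage of its first new element `n_k`, so it has that colour. Each step is a
countable Boolean combination of coordinates, whence Borel measurability. -/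

section Front

variable {B : Set (Finset ℕ)}

def IsFrontNode (B : Set (Finset ℕ)) (s : Finset ℕ) : Prop := ∀ t ∈ B, InitSegF t s → t = s

def FrontChild (B : Set (Finset ℕ)) (t s : Finset ℕ) : Prop :=
  IsFrontNode B s ∧ s ∉ B ∧ ∃ m, s.sup id < m ∧ t = insert m s

lemma initSegF_of_subset {s t : Finset ℕ} (hst : s ⊆ t)
    (hts : (t : Set ℕ) ⊆ s ∪ Ioi (s.sup id)) : InitSegF s t := by
  refine ⟨s.sup id, Finset.ext fun a => ⟨fun ha => ?_, fun ha => ?_⟩⟩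
  · exact Finset.mem_inter.2 ⟨hst ha, Finset.mem_Iic.2 (Finset.le_sup (f := id) ha)⟩
  · obtain ⟨hat, han⟩ := Finset.mem_inter.1 ha
    exact (hts hat).resolve_right (Finset.mem_Iic.1 han).not_gt

lemma sup_id_insert_of_lt {s : Finset ℕ} {m : ℕ} (hm : s.sup id < m) : (insert m s).sup id = m := by
  rw [Finset.sup_insert, id, sup_eq_left.2 hm.le]

lemma IsFrontNode.insert {s : Finset ℕ} (hs : IsFrontNode B s) (hsB : s ∉ B) {m : ℕ}
    (hm : s.sup id < m) : IsFrontNode B (insert m s) := by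
  rintro t htB ⟨n, rfl⟩
  by_cases hmn : m ≤ n
  · have hs_low : s ∩ Finset.Iic n = s :=
      Finset.inter_eq_left.2 fun a ha => Finset.mem_Iic.2 ((Finset.le_sup (f := id) ha).trans
        (hm.le.trans hmn))
    rw [Finset.insert_inter_of_mem (Finset.mem_Iic.2 hmn), hs_low]
  · rw [Finset.insert_inter_of_notMem (by simpa using hmn)] at htB ⊢
    exact absurd (hs _ htB ⟨n, rfl⟩ ▸ htB) hsB

lemma wellFounded_frontChild (hB : IsFrontOn B univ) : WellFounded (FrontChild B) := by
  rw [wellFounded_iff_isEmpty_descending_chain]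
  refine ⟨fun ⟨s, hs⟩ => ?_⟩
  choose hnode hnotB m hm hins using hs
  have hmono : Monotone fun n => (s n : Set ℕ) :=
    monotone_nat_of_le_succ fun n => by simp [hins n, Set.subset_insert]
  have hfin : ∀ t : Finset ℕ, (t : Set ℕ) ⊆ ⋃ n, (s n : Set ℕ) → ∃ K, t ⊆ s K := fun t ht =>
    (hmono.directed_le.exists_mem_subset_of_finset_subset_biUnion ht).imp
      fun _ => Finset.coe_subset.1
  have hinf : (⋃ n, (s n : Set ℕ)).Infinite := by
    intro hfinite
    obtain ⟨K, hK⟩ := hfin hfinite.toFinset (by simp)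
    have hmK : m K ∈ s K := hK (hfinite.mem_toFinset.2 (mem_iUnion.2 ⟨K + 1, by simp [hins K]⟩))
    exact (hm K).not_ge (Finset.le_sup (f := id) hmK)
  obtain ⟨t, htB, n, ht⟩ := hB.2.2 _ (subset_univ _) hinf
  obtain ⟨K, hK⟩ := hfin t (ht ▸ inter_subset_left)
  have hseg : InitSegF t (s K) := ⟨n, Finset.coe_injective <| by
    rw [Finset.coe_inter, Finset.coe_Iic, ht]
    refine subset_antisymm (subset_inter ?_ inter_subset_right) ?_
    · exact ht ▸ Finset.coe_subset.2 hK
    · exact inter_subset_inter_left _ (subset_iUnion (fun n => (s n : Set ℕ)) K)⟩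
  exact hnotB K (hnode K t htB hseg ▸ htB)

end Front

section Cantor

noncomputable def mins (z : Cantor) : ℕ := sInf (toSet z)

def cutAbove (m : ℕ) (z : Cantor) : Cantor := fun n => z n && decide (m < n)

lemma mins_mem {z : Cantor} (hz : (toSet z).Nonempty) : mins z ∈ toSet z := Nat.sInf_mem hz

lemma mins_eq_iff {z : Cantor} {n : ℕ} :
    mins z = n ↔ (z n = true ∧ ∀ m < n, z m = false) ∨ (n = 0 ∧ ∀ m, z m = false) := by
  classical
  rcases (toSet z).eq_empty_or_nonempty with hz | hz
  · have hfalse : ∀ m, z m = false := fun m => by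
      simpa [toSet] using eq_empty_iff_forall_notMem.1 hz m
    simp [mins, hz, hfalse, eq_comm]
  · obtain ⟨k, hk⟩ := hz
    have hne : ¬ ∀ m, z m = false := fun h => by simp [toSet, h] at hk
    rw [mins, Nat.sInf_def ⟨k, hk⟩, Nat.find_eq_iff]
    simp [toSet, hne]

lemma measurable_mins : Measurable mins :=
  measurable_to_countable' fun n => measurableSet_setOfPred.2 <| by
    simp_rw [mem_singleton_iff, mins_eq_iff]; fun_prop

lemma toSet_cutAbove (m : ℕ) (z : Cantor) : toSet (cutAbove m z) = toSet z ∩ Ioi m := by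
  ext n; simp [toSet, cutAbove]

lemma infinite_toSet_cutAbove {z : Cantor} (hz : (toSet z).Infinite) (m : ℕ) :
    (toSet (cutAbove m z)).Infinite := by
  rw [toSet_cutAbove, ← compl_Iic, ← sdiff_eq]
  exact hz.sdiff (finite_Iic m)

lemma measurable_cutAbove (m : ℕ) : Measurable (cutAbove m) :=
  measurable_pi_lambda _ fun n => by unfold cutAbove; fun_prop

end Cantor

open Classical in
noncomputable def frequentValue (c : ℕ → Bool) : Bool := decide {k | c k = true}.Infinite

lemma infinite_setOf_eq_frequentValue (c : ℕ → Bool) : {k | c k = frequentValue c}.Infinite := by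
  by_cases h : {k | c k = true}.Infinite
  · simp [frequentValue, h]
  · simpa [frequentValue, h, compl_ofPred] using (not_infinite.1 h).infinite_compl

section Measurability

variable {α β : Type*} [MeasurableSpace α] [MeasurableSpace β]

lemma Measurable.decide_of_prop {P : α → Prop} (hP : Measurable P) :
    Measurable fun a => @decide (P a) (Classical.dec _) :=
  measurable_to_bool (by simpa [preimage] using hP)

lemma Measurable.apply_nat {g : ℕ → α → β} (hg : ∀ n, Measurable (g n)) {f : α → ℕ}
    (hf : Measurable f) : Measurable fun a => g (f a) a :=
  (measurable_from_prod_countable_left (f := fun q : α × ℕ => g q.2 q.1) hg).comp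
    (measurable_id.prodMk hf)

lemma Measurable.frequentValue {c : α → ℕ → Bool} (hc : ∀ k, Measurable fun a => c a k) :
    Measurable fun a => frequentValue (c a) := by
  refine Measurable.decide_of_prop ?_
  simp_rw [← Nat.frequently_atTop_iff_infinite, Filter.frequently_atTop]
  fun_prop

end Measurability

def HomogAbove (B : Set (Finset ℕ)) (F : Finset ℕ → Bool) (s : Finset ℕ) (y : Set ℕ)
    (c : Bool) : Prop :=
  ∀ t ∈ B, s ⊆ t → (t : Set ℕ) ⊆ s ∪ y → F t = c

def SelectsAbove (B : Set (Finset ℕ)) (s : Finset ℕ)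
    (S : (Finset ℕ → Bool) × Cantor → Cantor × Bool) : Prop :=
  ∀ F x, (toSet x).Infinite → toSet x ⊆ Ioi (s.sup id) →
    toSet (S (F, x)).1 ⊆ toSet x ∧ (toSet (S (F, x)).1).Infinite ∧
      HomogAbove B F s (toSet (S (F, x)).1) (S (F, x)).2

section Fusion

variable {α : Type*} (child : ℕ → α × Cantor → Cantor × Bool)

noncomputable def fuseSeq (p : α × Cantor) : ℕ → Cantor × Bool
  | 0 => (p.2, false)
  | k + 1 =>
    let y := (fuseSeq p k).1
    child (mins y) (p.1, cutAbove (mins y) y)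

noncomputable def pivot (p : α × Cantor) (k : ℕ) : ℕ := mins (fuseSeq child p k).1

noncomputable def stepColour (p : α × Cantor) (k : ℕ) : Bool := (fuseSeq child p (k + 1)).2

def fuseStage (p : α × Cantor) (k : ℕ) : Set ℕ := toSet (fuseSeq child p k).1

open Classical in
noncomputable def fuse (p : α × Cantor) : Cantor × Bool :=
  let c := frequentValue (stepColour child p)
  (fun n => decide (∃ k, pivot child p k = n ∧ stepColour child p k = c), c)

lemma toSet_fuse (p : α × Cantor) :
    toSet (fuse child p).1 = pivot child p '' {k | stepColour child p k = (fuse child p).2} := by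
  ext n
  simp [toSet, fuse, and_comm]

end Fusion

lemma coe_subset_insert_min'_union {s t : Finset ℕ} {Y : Set ℕ} (hts : (t : Set ℕ) ⊆ s ∪ Y)
    (h : (t \ s).Nonempty) :
    (t : Set ℕ) ⊆ ↑(insert ((t \ s).min' h) s) ∪ (Y ∩ Ioi ((t \ s).min' h)) := by
  intro b hb
  by_cases hbs : b ∈ s
  · exact Or.inl (by simp [hbs])
  rcases (Finset.min'_le _ _ (Finset.mem_sdiff.2 ⟨hb, hbs⟩)).eq_or_lt with heq | hlt
  · exact Or.inl (by simp [heq])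
  · exact Or.inr ⟨(hts hb).resolve_left hbs, hlt⟩

section FusionSpec

variable {B : Set (Finset ℕ)} {s : Finset ℕ}
  {child : ℕ → (Finset ℕ → Bool) × Cantor → Cantor × Bool} {F : Finset ℕ → Bool} {x : Cantor}

lemma fuseStage_spec (hchild : ∀ m, s.sup id < m → SelectsAbove B (insert m s) (child m))
    (hx : (toSet x).Infinite) (hxs : toSet x ⊆ Ioi (s.sup id)) (k : ℕ) :
    (fuseStage child (F, x) k).Infinite ∧ fuseStage child (F, x) k ⊆ toSet x ∧
      fuseStage child (F, x) (k + 1) ⊆ fuseStage child (F, x) k ∩ Ioi (pivot child (F, x) k) ∧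
      HomogAbove B F (insert (pivot child (F, x) k) s) (fuseStage child (F, x) (k + 1))
        (stepColour child (F, x) k) := by
  set X := fuseStage child (F, x)
  have step : ∀ k, (X k).Infinite → X k ⊆ toSet x →
      X (k + 1) ⊆ X k ∩ Ioi (pivot child (F, x) k) ∧ (X (k + 1)).Infinite ∧
        HomogAbove B F (insert (pivot child (F, x) k) s) (X (k + 1))
          (stepColour child (F, x) k) := by
    intro k hk hkx
    have hpivot : s.sup id < pivot child (F, x) k := hxs (hkx (mins_mem hk.nonempty))
    obtain ⟨hsub, hinf, hhom⟩ := hchild _ hpivot F _ (infinite_toSet_cutAbove hk _)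
      (by rw [sup_id_insert_of_lt hpivot, toSet_cutAbove]; exact inter_subset_right)
    exact ⟨hsub.trans (toSet_cutAbove _ _).le, hinf, hhom⟩
  have inv : ∀ k, (X k).Infinite ∧ X k ⊆ toSet x := by
    intro k
    induction k with
    | zero => exact ⟨hx, subset_rfl⟩
    | succ k ih =>
      obtain ⟨hsub, hinf, -⟩ := step k ih.1 ih.2
      exact ⟨hinf, (hsub.trans inter_subset_left).trans ih.2⟩
  obtain ⟨hsub, -, hhom⟩ := step k (inv k).1 (inv k).2
  exact ⟨(inv k).1, (inv k).2, hsub, hhom⟩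

lemma selectsAbove_fuse (hsB : s ∉ B)
    (hchild : ∀ m, s.sup id < m → SelectsAbove B (insert m s) (child m)) :
    SelectsAbove B s (fuse child) := by
  intro F x hx hxs
  have spec := fuseStage_spec (F := F) hchild hx hxs
  set X := fuseStage child (F, x)
  set n := pivot child (F, x)
  have hn : ∀ k, n k ∈ X k := fun k => mins_mem (spec k).1.nonempty
  have hX : Antitone X := antitone_nat_of_succ_le fun k => (spec k).2.2.1.trans inter_subset_left
  have hnmono : StrictMono n := strictMono_nat_of_lt_succ fun k => ((spec k).2.2.1 (hn (k + 1))).2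
  rw [toSet_fuse]
  refine ⟨?_, (infinite_setOf_eq_frequentValue _).image hnmono.injective.injOn, ?_⟩
  · rintro _ ⟨k, -, rfl⟩
    exact (spec k).2.1 (hn k)
  intro t htB hst hts
  have hne : (t \ s).Nonempty :=
    Finset.sdiff_nonempty.2 fun hts' => hsB (subset_antisymm hts' hst ▸ htB)
  obtain ⟨hat, has⟩ := Finset.mem_sdiff.1 (Finset.min'_mem _ hne)
  obtain ⟨k, hk, hka⟩ := (hts hat).resolve_left has
  change n k = _ at hka
  have hcover := coe_subset_insert_min'_union hts hne
  rw [← hka] at hat hcover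
  have hlate : n '' {k | stepColour child (F, x) k = (fuse child (F, x)).2} ∩ Ioi (n k) ⊆
      X (k + 1) := by
    rintro _ ⟨⟨j, -, rfl⟩, hj⟩
    exact hX (hnmono.lt_iff_lt.1 hj) (hn j)
  rw [(spec k).2.2.2 t htB (Finset.insert_subset hat hst)
    (hcover.trans (union_subset_union_right _ hlate)), hk]

end FusionSpec

section FusionMeasurable

variable {α : Type*} [MeasurableSpace α] {child : ℕ → α × Cantor → Cantor × Bool}

lemma measurable_fuseSeq (hc : ∀ m, Measurable (child m)) (k : ℕ) :
    Measurable fun p => fuseSeq child p k := by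
  induction k with
  | zero => exact measurable_snd.prodMk measurable_const
  | succ k ih =>
    exact Measurable.apply_nat
      (fun m => (hc m).comp (measurable_fst.prodMk ((measurable_cutAbove m).comp ih.fst)))
      (measurable_mins.comp ih.fst)

lemma measurable_fuse (hc : ∀ m, Measurable (child m)) : Measurable (fuse child) := by
  have hpivot : ∀ k, Measurable fun p => pivot child p k :=
    fun k => measurable_mins.comp (measurable_fuseSeq hc k).fst
  have hcolour : ∀ k, Measurable fun p => stepColour child p k :=
    fun k => (measurable_fuseSeq hc (k + 1)).snd
  have hfreq := Measurable.frequentValue hcolour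
  exact (measurable_pi_lambda _ fun n => Measurable.decide_of_prop (by fun_prop)).prodMk hfreq

end FusionMeasurable

section Selector

variable {B : Set (Finset ℕ)}

lemma selectsAbove_of_mem (hB : IsFrontOn B univ) {s : Finset ℕ} (hs : s ∈ B) :
    SelectsAbove B s fun p => (p.2, p.1 s) := by
  refine fun F x hx hxs => ⟨subset_rfl, hx, fun t htB hst hts => ?_⟩
  rw [hB.2.1 s hs t htB (initSegF_of_subset hst (hts.trans (union_subset_union_right _ hxs)))]

open Classical in
noncomputable def frontSelector (hB : IsFrontOn B univ) :
    Finset ℕ → (Finset ℕ → Bool) × Cantor → Cantor × Bool :=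
  (wellFounded_frontChild hB).fix fun s ih =>
    if hs : s ∈ B then fun p => (p.2, p.1 s)
    else fuse fun m =>
      if h : IsFrontNode B s ∧ s.sup id < m then ih (insert m s) ⟨h.1, hs, m, h.2, rfl⟩
      else fun _ => (fun _ => false, false)

open Classical in
lemma frontSelector_eq (hB : IsFrontOn B univ) (s : Finset ℕ) :
    frontSelector hB s =
      if s ∈ B then fun p => (p.2, p.1 s)
      else fuse fun m =>
        if IsFrontNode B s ∧ s.sup id < m then frontSelector hB (insert m s)
        else fun _ => (fun _ => false, false) := by
  rw [frontSelector, WellFounded.fix_eq]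
  simp only [dite_eq_ite]

lemma selectsAbove_frontSelector (hB : IsFrontOn B univ) {s : Finset ℕ} (hs : IsFrontNode B s) :
    SelectsAbove B s (frontSelector hB s) := by
  induction s using (wellFounded_frontChild hB).induction with
  | _ s ih =>
  rw [frontSelector_eq]
  split_ifs with hsB
  · exact selectsAbove_of_mem hB hsB
  · refine selectsAbove_fuse hsB fun m hm => ?_
    rw [if_pos ⟨hs, hm⟩]
    exact ih _ ⟨hs, hsB, m, hm, rfl⟩ (hs.insert hsB hm)

lemma measurable_frontSelector (hB : IsFrontOn B univ) (s : Finset ℕ) :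
    Measurable (frontSelector hB s) := by
  induction s using (wellFounded_frontChild hB).induction with
  | _ s ih =>
  rw [frontSelector_eq]
  split_ifs with hsB
  · exact measurable_snd.prodMk ((measurable_pi_apply s).comp measurable_fst)
  · refine measurable_fuse fun m => ?_
    split_ifs with h
    · exact ih _ ⟨h.1, hsB, m, h.2, rfl⟩
    · exact measurable_const

end Selector

/-- Uniform Nash–Williams theorem: for a front `B` on `ℕ` there is a Borel map
`S : 2^B × [ℕ]^ω → [ℕ]^ω` such that `S(F,x)` is an infinite subset of `x`
homogeneous for `F`. -/
theorem uniform_nash_williams (B : Set (Finset ℕ)) (hB : IsFrontOn B Set.univ) :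
    ∃ S : (Finset ℕ → Bool) → Cantor → Cantor,
      Measurable (Function.uncurry S) ∧
      ∀ F : Finset ℕ → Bool, {s : Finset ℕ | F s = true} ⊆ B →
        ∀ x : Cantor, (toSet x).Infinite →
          toSet (S F x) ⊆ toSet x ∧ (toSet (S F x)).Infinite ∧
          ((∀ s : Finset ℕ, (s : Set ℕ) ⊆ toSet (S F x) → s ∈ B → F s = true) ∨
           (∀ s : Finset ℕ, (s : Set ℕ) ⊆ toSet (S F x) → F s = false)) := by
  -- `0` is removed from `x` since `InitSegF ∅ t` fails whenever `0 ∈ t`.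
  refine ⟨fun F x => (frontSelector hB ∅ (F, cutAbove 0 x)).1, ?_, fun F hF x hx => ?_⟩
  · exact ((measurable_frontSelector hB ∅).comp
      (measurable_fst.prodMk ((measurable_cutAbove 0).comp measurable_snd))).fst
  have hroot : IsFrontNode B ∅ := fun t _ ⟨n, hn⟩ => by simpa using hn
  obtain ⟨hsub, hinf, hhom⟩ := selectsAbove_frontSelector hB hroot F (cutAbove 0 x)
    (infinite_toSet_cutAbove hx 0) (by simp [toSet_cutAbove])
  refine ⟨hsub.trans (toSet_cutAbove 0 x ▸ inter_subset_left), hinf, ?_⟩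
  have hcolour : ∀ s ∈ B, (s : Set ℕ) ⊆ toSet (frontSelector hB ∅ (F, cutAbove 0 x)).1 →
      F s = (frontSelector hB ∅ (F, cutAbove 0 x)).2 :=
    fun s hsB hs => hhom s hsB s.empty_subset (by simpa using hs)
  cases hc : (frontSelector hB ∅ (F, cutAbove 0 x)).2
  · exact Or.inr fun s hs => Bool.eq_false_iff.2 fun hFs => by
      simpa [hFs, hc] using hcolour s (hF hFs) hs
  · exact Or.inl fun s hs hsB => hc ▸ hcolour s hsB hs
end

section
/- Uniform Ramsey theorem: For each n ∈ ℕ there is a Borel function S : 2^{[ℕ]^n} × [ℕ]^ω → [ℕ]^ω such that for every F ⊆ [ℕ]^n and every infinite x ⊆ ℕ, S(F,x) is an infinite subset of x homogeneous for F, i.e. either every n-element subset of S(F,x) belongs to F, or no n-element subset of S(F,x) belongs to F. -/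
open Set

namespace UR


lemma mem_toSet {z : Cantor} {b : ℕ} : b ∈ toSet z ↔ z b = true := Iff.rfl

open Classical in
noncomputable def split (w : Cantor) (c : ℕ → Bool) : Cantor :=
  fun b => w b && (c b == decide ((toSet fun b' => w b' && c b').Infinite))

lemma split_subset (w : Cantor) (c : ℕ → Bool) : toSet (split w c) ⊆ toSet w := by
  intro b hb
  simp only [mem_toSet, split, Bool.and_eq_true] at hb
  exact hb.1

lemma split_const (w : Cantor) (c : ℕ → Bool) {b b' : ℕ}
    (hb : b ∈ toSet (split w c)) (hb' : b' ∈ toSet (split w c)) : c b = c b' := by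
  simp only [mem_toSet, split, Bool.and_eq_true, beq_iff_eq] at hb hb'
  rw [hb.2, hb'.2]

lemma split_infinite {w : Cantor} (hw : (toSet w).Infinite) (c : ℕ → Bool) :
    (toSet (split w c)).Infinite := by
  classical
  by_cases h : (toSet fun b' => w b' && c b').Infinite
  · have hd : (toSet (split w c)) = (toSet fun b' => w b' && c b') := by
      ext b
      simp [mem_toSet, split, decide_eq_true h]
    rw [hd]; exact h
  · have hfin : (toSet fun b' => w b' && c b').Finite := Set.not_infinite.mp h
    have hsub : toSet w \ (toSet fun b' => w b' && c b') ⊆ toSet (split w c) := by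
      intro b hb
      obtain ⟨h1, h2⟩ := hb
      simp only [mem_toSet, Bool.and_eq_true] at h1 h2 ⊢
      simp only [split, Bool.and_eq_true, beq_iff_eq]
      refine ⟨h1, ?_⟩
      have hc : c b = false := by
        cases hcb : c b
        · rfl
        · exact absurd ⟨h1, hcb⟩ h2
      rw [hc, decide_eq_false h]
    exact (hw.diff hfin).mono hsub

noncomputable def refine (F : Finset ℕ → Bool) : Cantor → List (Finset ℕ) → Cantor
  | z, [] => z
  | z, t :: l => refine F (split z (fun b => F (insert b t))) l

lemma refine_subset (F : Finset ℕ → Bool) : ∀ (l : List (Finset ℕ)) (z : Cantor),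
    toSet (refine F z l) ⊆ toSet z := by
  intro l
  induction l with
  | nil => intro z; simp [refine]
  | cons t l ih =>
    intro z
    exact (ih _).trans (split_subset _ _)

lemma refine_infinite (F : Finset ℕ → Bool) : ∀ (l : List (Finset ℕ)) (z : Cantor),
    (toSet z).Infinite → (toSet (refine F z l)).Infinite := by
  intro l
  induction l with
  | nil => intro z hz; simpa [refine] using hz
  | cons t l ih => intro z hz; exact ih _ (split_infinite hz _)

lemma refine_const (F : Finset ℕ → Bool) : ∀ (l : List (Finset ℕ)) (z : Cantor) (t : Finset ℕ),
    t ∈ l → ∀ b b', b ∈ toSet (refine F z l) → b' ∈ toSet (refine F z l) →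
      F (insert b t) = F (insert b' t) := by
  intro l
  induction l with
  | nil => intro z t ht; simp at ht
  | cons t0 l ih =>
    intro z t ht b b' hb hb'
    rcases List.mem_cons.mp ht with h | h
    · subst h
      exact split_const z _ (refine_subset F l _ hb) (refine_subset F l _ hb')
    · exact ih _ t h b b' hb hb'


open Classical in
noncomputable def stepfun (m : ℕ) (F : Finset ℕ → Bool) (zs : Cantor × Finset ℕ) :
    Cantor × Finset ℕ :=
  (refine F (fun b => zs.1 b && decide (sInf (toSet zs.1) < b))
      (((insert (sInf (toSet zs.1)) zs.2).powersetCard m).toList),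
    insert (sInf (toSet zs.1)) zs.2)

noncomputable def state (m : ℕ) (F : Finset ℕ → Bool) (x : Cantor) : ℕ → Cantor × Finset ℕ
  | 0 => (x, ∅)
  | k+1 => stepfun m F (state m F x k)

noncomputable def aSeq (m : ℕ) (F : Finset ℕ → Bool) (x : Cantor) (k : ℕ) : ℕ :=
  sInf (toSet (state m F x k).1)

noncomputable def gCol (m : ℕ) (F : Finset ℕ → Bool) (x : Cantor) (I : Finset ℕ) : Bool :=
  F (insert (aSeq m F x (I.sup id + 1)) (I.image (aSeq m F x)))

variable {m : ℕ} {F : Finset ℕ → Bool} {x : Cantor}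

lemma state_succ_fst (k : ℕ) :
    (state m F x (k+1)).1 = refine F
      (fun b => (state m F x k).1 b && decide (aSeq m F x k < b))
      ((((state m F x (k+1)).2).powersetCard m).toList) := rfl

lemma state_succ_snd (k : ℕ) :
    (state m F x (k+1)).2 = insert (aSeq m F x k) (state m F x k).2 := rfl

lemma state_succ_subset (k : ℕ) :
    toSet (state m F x (k+1)).1 ⊆
      {b | b ∈ toSet (state m F x k).1 ∧ aSeq m F x k < b} := by
  intro b hb
  have := refine_subset F _ _ hb
  simp only [mem_toSet, Bool.and_eq_true, decide_eq_true_eq] at this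
  exact this

lemma state_infinite (hx : (toSet x).Infinite) (k : ℕ) :
    (toSet (state m F x k).1).Infinite := by
  induction k with
  | zero => exact hx
  | succ k ih =>
    have h1 : toSet (state m F x k).1 \ Set.Iic (aSeq m F x k) ⊆
        toSet (fun b => (state m F x k).1 b && decide (aSeq m F x k < b)) := by
      intro b hb
      simp only [mem_toSet, Bool.and_eq_true, decide_eq_true_eq]
      exact ⟨hb.1, by simpa using hb.2⟩
    exact refine_infinite F _ _ (((ih.diff (Set.finite_Iic _)).mono h1))

lemma aSeq_mem (hx : (toSet x).Infinite) (k : ℕ) :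
    aSeq m F x k ∈ toSet (state m F x k).1 :=
  Nat.sInf_mem (state_infinite hx k).nonempty

lemma aSeq_strictMono (hx : (toSet x).Infinite) : StrictMono (aSeq m F x) := by
  apply strictMono_nat_of_lt_succ
  intro k
  exact (state_succ_subset k (aSeq_mem hx (k+1))).2

lemma state_subset_x : ∀ k, toSet (state m F x k).1 ⊆ toSet x := by
  intro k
  induction k with
  | zero => exact fun b hb => hb
  | succ k ih => exact fun b hb => ih (state_succ_subset k hb).1

lemma aSeq_mem_x (hx : (toSet x).Infinite) (k : ℕ) : aSeq m F x k ∈ toSet x :=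
  state_subset_x k (aSeq_mem hx k)

lemma state_snd (k : ℕ) :
    (state m F x k).2 = (Finset.range k).image (aSeq m F x) := by
  induction k with
  | zero => simp [state]
  | succ k ih =>
    rw [state_succ_snd, ih, Finset.range_add_one, Finset.image_insert]

lemma state_mono : ∀ {j k : ℕ}, j ≤ k → toSet (state m F x k).1 ⊆ toSet (state m F x j).1 := by
  intro j k hjk
  induction k with
  | zero => simp_all
  | succ k ih =>
    rcases Nat.lt_or_ge j (k+1) with h | h
    · exact fun b hb => ih (Nat.lt_succ_iff.mp h) (state_succ_subset k hb).1
    · have : j = k + 1 := le_antisymm hjk h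
      subst this; exact fun b hb => hb

lemma const_on_state (k : ℕ) {t : Finset ℕ}
    (ht : t ∈ ((state m F x (k+1)).2).powersetCard m) :
    ∀ b b', b ∈ toSet (state m F x (k+1)).1 → b' ∈ toSet (state m F x (k+1)).1 →
      F (insert b t) = F (insert b' t) := by
  intro b b' hb hb'
  rw [state_succ_fst] at hb hb'
  exact refine_const F _ _ t (Finset.mem_toList.mpr ht) b b' hb hb'

lemma key_color (hx : (toSet x).Infinite) (hm : 1 ≤ m) {J : Finset ℕ}
    (hJ : J.card = m + 1) :
    F (J.image (aSeq m F x)) =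
      gCol m F x (J.erase (J.max' (Finset.card_pos.mp (by omega)))) := by
  set a := aSeq m F x with ha
  have hne : J.Nonempty := Finset.card_pos.mp (by omega)
  set jm := J.max' hne with hjm
  set I := J.erase jm with hI
  have hIc : I.card = m := by
    rw [hI, Finset.card_erase_of_mem (J.max'_mem hne), hJ]; omega
  have hIne : I.Nonempty := Finset.card_pos.mp (by omega)
  have hlt : ∀ i ∈ I, i < jm := by
    intro i hi
    exact lt_of_le_of_ne (J.le_max' i (Finset.mem_of_mem_erase hi))
      (Finset.ne_of_mem_erase hi)
  have hjmpos : 0 < jm := by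
    obtain ⟨i0, hi0⟩ := hIne
    exact lt_of_le_of_lt (Nat.zero_le i0) (hlt i0 hi0)
  have hsup : I.sup id < jm := (Finset.sup_lt_iff hjmpos).mpr hlt
  set K := I.sup id + 1 with hK
  have hKjm : K ≤ jm := hsup
  have hainj : Function.Injective a := (aSeq_strictMono hx).injective
  set t := I.image a with htdef
  have ht : t ∈ ((state m F x K).2).powersetCard m := by
    rw [Finset.mem_powersetCard]
    constructor
    · rw [state_snd]
      apply Finset.image_subset_image
      intro i hi
      rw [Finset.mem_range]
      exact lt_of_le_of_lt (Finset.le_sup (f := id) hi) (Nat.lt_succ_self _)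
    · rw [htdef, Finset.card_image_of_injective _ hainj, hIc]
  have hb1 : a jm ∈ toSet (state m F x K).1 := state_mono hKjm (aSeq_mem hx jm)
  have hb2 : a K ∈ toSet (state m F x K).1 := aSeq_mem hx K
  have hconst := const_on_state (m := m) (F := F) (x := x) (I.sup id) (t := t)
    (by rw [← hK]; exact ht) (a jm) (a K) (by rw [← hK]; exact hb1) (by rw [← hK]; exact hb2)
  have himg : J.image a = insert (a jm) t := by
    conv_lhs => rw [← Finset.insert_erase (J.max'_mem hne)]
    rw [Finset.image_insert]
  rw [himg, hconst]
  rfl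


open Classical in
noncomputable def Sel : ℕ → (Finset ℕ → Bool) → Cantor → Cantor
  | 0 => fun _ x => x
  | 1 => fun F x => split x (fun b => F {b})
  | n+2 => fun F x => fun b =>
      decide (∃ i, i ≤ b ∧ Sel (n+1) (gCol (n+1) F x) (fun _ => true) i = true
        ∧ aSeq (n+1) F x i = b)

def SelSpec (n : ℕ) : Prop :=
  ∀ (F : Finset ℕ → Bool) (x : Cantor), (toSet x).Infinite →
    toSet (Sel n F x) ⊆ toSet x ∧ (toSet (Sel n F x)).Infinite ∧
    ((∀ s : Finset ℕ, (s : Set ℕ) ⊆ toSet (Sel n F x) → s.card = n → F s = true) ∨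
     (∀ s : Finset ℕ, (s : Set ℕ) ⊆ toSet (Sel n F x) → s.card = n → F s = false))

lemma selSpec_zero : SelSpec 0 := by
  intro F x hx
  refine ⟨fun b hb => hb, hx, ?_⟩
  cases h : F ∅ with
  | true =>
    left; intro s _ hs
    rwa [Finset.card_eq_zero.mp hs]
  | false =>
    right; intro s _ hs
    rwa [Finset.card_eq_zero.mp hs]

lemma selSpec_one : SelSpec 1 := by
  intro F x hx
  have hsub : toSet (Sel 1 F x) ⊆ toSet x := split_subset _ _
  have hinf : (toSet (Sel 1 F x)).Infinite := split_infinite hx _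
  refine ⟨hsub, hinf, ?_⟩
  obtain ⟨b0, hb0⟩ := hinf.nonempty
  have hcon : ∀ b ∈ toSet (Sel 1 F x), F {b} = F {b0} :=
    fun b hb => split_const x _ hb hb0
  cases h : F {b0} with
  | true =>
    left; intro s hs hcard
    obtain ⟨b, rfl⟩ := Finset.card_eq_one.mp hcard
    rw [hcon b (hs (by simp))]; exact h
  | false =>
    right; intro s hs hcard
    obtain ⟨b, rfl⟩ := Finset.card_eq_one.mp hcard
    rw [hcon b (hs (by simp))]; exact h

lemma toSet_sel_succ (n : ℕ) (F : Finset ℕ → Bool) (x : Cantor) (hx : (toSet x).Infinite) :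
    toSet (Sel (n+2) F x) =
      aSeq (n+1) F x '' toSet (Sel (n+1) (gCol (n+1) F x) (fun _ => true)) := by
  ext b
  simp only [toSet, Set.mem_setOf_eq, Sel, decide_eq_true_eq, Set.mem_image]
  constructor
  · rintro ⟨i, _, hi, rfl⟩; exact ⟨i, hi, rfl⟩
  · rintro ⟨i, hi, rfl⟩
    exact ⟨i, (aSeq_strictMono hx).le_apply, hi, rfl⟩

lemma toSet_top : toSet (fun _ => true) = Set.univ := by
  ext b; simp [toSet]

lemma selSpec_succ (n : ℕ) (ih : SelSpec (n+1)) : SelSpec (n+2) := by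
  intro F x hx
  set a := aSeq (n+1) F x with ha
  set H := Sel (n+1) (gCol (n+1) F x) (fun _ => true) with hH
  have hamono : StrictMono a := aSeq_strictMono hx
  have hainj : Function.Injective a := hamono.injective
  obtain ⟨-, hHinf, hHhom⟩ := ih (gCol (n+1) F x) (fun _ => true)
    (by rw [toSet_top]; exact Set.infinite_univ)
  have hset : toSet (Sel (n+2) F x) = a '' toSet H := toSet_sel_succ n F x hx
  have hsub : toSet (Sel (n+2) F x) ⊆ toSet x := by
    rw [hset]; rintro b ⟨i, _, rfl⟩; exact aSeq_mem_x hx i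
  have hinf : (toSet (Sel (n+2) F x)).Infinite := by
    rw [hset]; exact hHinf.image (hainj.injOn)
  refine ⟨hsub, hinf, ?_⟩
  have key : ∀ s : Finset ℕ, (s : Set ℕ) ⊆ toSet (Sel (n+2) F x) → s.card = n + 2 →
      ∃ I : Finset ℕ, (I : Set ℕ) ⊆ toSet H ∧ I.card = n + 1 ∧
        F s = gCol (n+1) F x I := by
    intro s hs hcard
    classical
    have hmem : ∀ b ∈ s, ∃ i, i ∈ toSet H ∧ a i = b := by
      intro b hb
      have := hs hb
      rw [hset] at this
      obtain ⟨i, hi, rfl⟩ := this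
      exact ⟨i, hi, rfl⟩
    set J := s.image (Function.invFun a) with hJ
    have hJinv : ∀ b ∈ s, a (Function.invFun a b) = b := by
      intro b hb
      obtain ⟨i, _, hi⟩ := hmem b hb
      exact Function.invFun_eq ⟨i, hi⟩
    have hsJ : J.image a = s := by
      rw [hJ, Finset.image_image]
      conv_rhs => rw [← Finset.image_id (s := s)]
      exact Finset.image_congr (fun b hb => hJinv b hb)
    have hJcard : J.card = n + 2 := by
      rw [hJ, Finset.card_image_of_injOn, hcard]
      intro b hb b' hb' heq
      rw [← hJinv b hb, ← hJinv b' hb', heq]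
    have hJH : (J : Set ℕ) ⊆ toSet H := by
      intro i hi
      simp only [hJ, Finset.coe_image, Set.mem_image, Finset.mem_coe] at hi
      obtain ⟨b, hb, rfl⟩ := hi
      obtain ⟨i0, hi0, hi0b⟩ := hmem b hb
      have : a (Function.invFun a b) = a i0 := by rw [hJinv b hb, hi0b]
      rw [hainj this]
      exact hi0
    have hJne : J.Nonempty := Finset.card_pos.mp (by omega)
    refine ⟨J.erase (J.max' hJne), ?_, ?_, ?_⟩
    · exact fun i hi => hJH (Finset.mem_of_mem_erase hi)
    · rw [Finset.card_erase_of_mem (J.max'_mem hJne), hJcard]; omega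
    · rw [← hsJ]
      exact key_color hx (by omega) (by omega : J.card = (n+1) + 1)
  rcases hHhom with hl | hl
  · left
    intro s hs hcard
    obtain ⟨I, h1, h2, h3⟩ := key s hs hcard
    rw [h3]; exact hl I h1 h2
  · right
    intro s hs hcard
    obtain ⟨I, h1, h2, h3⟩ := key s hs hcard
    rw [h3]; exact hl I h1 h2

lemma selSpec (n : ℕ) : SelSpec n := by
  induction n using Nat.strong_induction_on with
  | _ n ih =>
    match n with
    | 0 => exact selSpec_zero
    | 1 => exact selSpec_one
    | n+2 => exact selSpec_succ n (ih (n+1) (by omega))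


lemma measurableSet_coord (k : ℕ) (b : Bool) : MeasurableSet {z : Cantor | z k = b} := by
  have h : {z : Cantor | z k = b} = (fun z : Cantor => z k) ⁻¹' {b} := rfl
  rw [h]; exact measurable_pi_apply k (measurableSet_singleton b)

lemma measurableSet_infinite : MeasurableSet {z : Cantor | (toSet z).Infinite} := by
  have h : {z : Cantor | (toSet z).Infinite} = ⋂ m, ⋃ k, ⋃ (_ : m < k), {z : Cantor | z k = true} := by
    ext z
    simp only [Set.mem_setOf_eq, Set.mem_iInter, Set.mem_iUnion]
    constructor
    · intro hz m
      obtain ⟨k, hk, hmk⟩ := hz.exists_gt m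
      exact ⟨k, hmk, hk⟩
    · intro hz
      apply Set.infinite_of_forall_exists_gt
      intro m
      obtain ⟨k, hmk, hk⟩ := hz m
      exact ⟨k, hk, hmk⟩
  rw [h]
  exact MeasurableSet.iInter fun m => MeasurableSet.iUnion fun k => MeasurableSet.iUnion fun _ =>
    measurableSet_coord k true

lemma measurable_sInf_toSet : Measurable fun z : Cantor => sInf (toSet z) := by
  apply measurable_to_countable'
  intro v
  by_cases hv : v = 0
  · subst hv
    have h : (fun z : Cantor => sInf (toSet z)) ⁻¹' {0} =
        {z : Cantor | z 0 = true} ∪ ⋂ j, {z : Cantor | z j = false} := by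
      ext z
      simp only [Set.mem_preimage, Set.mem_singleton_iff, Set.mem_union, Set.mem_iInter,
        Set.mem_setOf_eq]
      constructor
      · intro hz
        by_cases hne : (toSet z).Nonempty
        · left
          have := Nat.sInf_mem hne
          rw [hz] at this
          exact this
        · right
          intro j
          have hj : j ∉ toSet z := fun hmem => hne ⟨j, hmem⟩
          simpa [toSet, Set.mem_setOf_eq, Bool.not_eq_true] using hj
      · intro hz
        rcases hz with h1 | h1
        · exact Nat.le_antisymm (Nat.sInf_le h1) (Nat.zero_le _)
        · have hempty : toSet z = ∅ := by
            ext j; simp [toSet, h1 j]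
          rw [hempty]; exact Nat.sInf_empty
    rw [h]
    exact (measurableSet_coord 0 true).union
      (MeasurableSet.iInter fun j => measurableSet_coord j false)
  · have h : (fun z : Cantor => sInf (toSet z)) ⁻¹' {v} =
        {z : Cantor | z v = true} ∩ ⋂ j, ⋂ (_ : j < v), {z : Cantor | z j = false} := by
      ext z
      simp only [Set.mem_preimage, Set.mem_singleton_iff, Set.mem_inter_iff, Set.mem_iInter,
        Set.mem_setOf_eq]
      constructor
      · intro hz
        have hne : (toSet z).Nonempty := by
          by_contra hne
          have hempty : toSet z = ∅ := Set.not_nonempty_iff_eq_empty.mp hne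
          rw [hempty, Nat.sInf_empty] at hz
          exact hv hz.symm
        refine ⟨by have := Nat.sInf_mem hne; rwa [hz] at this, ?_⟩
        intro j hj
        have hjn : j ∉ toSet z := Nat.notMem_of_lt_sInf (by rw [hz]; exact hj)
        simpa [toSet, Set.mem_setOf_eq, Bool.not_eq_true] using hjn
      · rintro ⟨h1, h2⟩
        apply le_antisymm (Nat.sInf_le h1)
        apply le_csInf ⟨v, h1⟩
        intro j hj
        by_contra hlt
        push_neg at hlt
        have hjt : z j = true := hj
        rw [h2 j hlt] at hjt
        exact Bool.false_ne_true hjt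
    rw [h]
    exact (measurableSet_coord v true).inter
      (MeasurableSet.iInter fun j => MeasurableSet.iInter fun _ =>
        measurableSet_coord j false)

lemma measurable_cond {α β : Type*} [MeasurableSpace α] [Countable β] {c : α → β}
    (hc : ∀ t : β, MeasurableSet {p | c p = t}) {f : β → α → Bool}
    (hf : ∀ t, Measurable (f t)) : Measurable fun p => f (c p) p := by
  apply measurable_to_countable'
  intro y
  have h : (fun p => f (c p) p) ⁻¹' {y} = ⋃ t, {p | c p = t} ∩ (f t ⁻¹' {y}) := by
    ext p
    simp only [Set.mem_preimage, Set.mem_singleton_iff, Set.mem_iUnion, Set.mem_inter_iff,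
      Set.mem_setOf_eq]
    constructor
    · intro hp; exact ⟨c p, rfl, hp⟩
    · rintro ⟨t, ht, hp⟩; rw [ht]; exact hp
  rw [h]
  exact MeasurableSet.iUnion fun t => (hc t).inter ((hf t) (measurableSet_singleton y))

lemma fibers_of_depends {α β : Type*} [MeasurableSpace α] {d : α → ℕ → ℕ}
    (hd : ∀ i, Measurable fun p => d p i) (kk : ℕ) (Φ : (ℕ → ℕ) → β)
    (hΦ : ∀ f g : ℕ → ℕ, (∀ i, i < kk → f i = g i) → Φ f = Φ g) (t : β) :
    MeasurableSet {p | Φ (d p) = t} := by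
  classical
  have h : {p | Φ (d p) = t} =
      ⋃ (u : Fin kk → ℕ), ⋃ (_ : Φ (fun i => if h : i < kk then u ⟨i, h⟩ else 0) = t),
        ⋂ i : Fin kk, {p | d p i.1 = u i} := by
    ext p
    simp only [Set.mem_setOf_eq, Set.mem_iUnion, Set.mem_iInter]
    constructor
    · intro hp
      refine ⟨fun i => d p i.1, ?_, fun i => rfl⟩
      rw [← hp]
      apply hΦ
      intro i hi
      simp [hi]
    · rintro ⟨u, hu, hdu⟩
      rw [← hu]
      apply hΦ
      intro i hi
      simpa [hi] using hdu ⟨i, hi⟩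
  rw [h]
  exact MeasurableSet.iUnion fun u => MeasurableSet.iUnion fun _ =>
    MeasurableSet.iInter fun i => by
      have he : {p | d p i.1 = u i} = (fun p => d p i.1) ⁻¹' {u i} := rfl
      rw [he]; exact (hd i.1) (measurableSet_singleton (u i))


section Meas
variable {α : Type*} [MeasurableSpace α]

lemma measurable_boolOp (op : Bool → Bool → Bool) {f g : α → Bool}
    (hf : Measurable f) (hg : Measurable g) : Measurable fun p => op (f p) (g p) := by
  have h : (fun p => op (f p) (g p)) = (fun q : Bool × Bool => op q.1 q.2) ∘ fun p => (f p, g p) := rfl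
  rw [h]
  exact Measurable.comp .of_discrete (hf.prodMk hg)

lemma measurable_decide {P : α → Prop} {inst : ∀ p, Decidable (P p)}
    (h : MeasurableSet {p | P p}) : Measurable fun p => @decide (P p) (inst p) := by
  apply measurable_to_countable'
  intro y
  cases y
  · have he : (fun p => @decide (P p) (inst p)) ⁻¹' {false} = {p | P p}ᶜ := by
      ext p; simp
    rw [he]; exact h.compl
  · have he : (fun p => @decide (P p) (inst p)) ⁻¹' {true} = {p | P p} := by
      ext p; simp
    rw [he]; exact h

lemma measurable_split {w : α → Cantor} {c : α → ℕ → Bool}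
    (hw : Measurable w) (hc : Measurable c) :
    Measurable fun p => split (w p) (c p) := by
  classical
  apply measurable_pi_lambda
  intro b
  have h1 : Measurable fun p => (fun b' => w p b' && c p b') :=
    measurable_pi_lambda _ fun b' => measurable_boolOp (· && ·)
      ((measurable_pi_apply b').comp hw) ((measurable_pi_apply b').comp hc)
  have hP : MeasurableSet {p | (toSet fun b' => w p b' && c p b').Infinite} := by
    have he : {p | (toSet fun b' => w p b' && c p b').Infinite} =
        (fun p => (fun b' => w p b' && c p b')) ⁻¹' {z : Cantor | (toSet z).Infinite} := rfl
    rw [he]; exact h1 measurableSet_infinite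
  have hd : Measurable fun p => decide ((toSet fun b' => w p b' && c p b').Infinite) :=
    measurable_decide hP
  show Measurable fun p => (w p b && (c p b == decide ((toSet fun b' => w p b' && c p b').Infinite)))
  exact measurable_boolOp (· && ·) ((measurable_pi_apply b).comp hw)
    (measurable_boolOp (· == ·) ((measurable_pi_apply b).comp hc) hd)

lemma measurable_refine {FF : α → Finset ℕ → Bool} (hFF : Measurable FF) :
    ∀ (l : List (Finset ℕ)) {z : α → Cantor}, Measurable z →
      Measurable fun p => refine (FF p) (z p) l := by
  intro l
  induction l with
  | nil => intro z hz; simpa [refine] using hz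
  | cons t l ih =>
    intro z hz
    have hc : Measurable fun p => (fun b => FF p (insert b t)) :=
      measurable_pi_lambda _ fun b => (measurable_pi_apply (insert b t)).comp hFF
    have := ih (measurable_split hz hc)
    simpa [refine] using this

lemma measurable_state_fst (m : ℕ) {FF : α → Finset ℕ → Bool} {X : α → Cantor}
    (hFF : Measurable FF) (hX : Measurable X) :
    ∀ k, Measurable fun p => (state m (FF p) (X p) k).1 := by
  intro k
  induction k using Nat.strong_induction_on with
  | _ k ih =>
    match k with
    | 0 => exact hX
    | k+1 =>
      have hprev : Measurable fun p => (state m (FF p) (X p) k).1 := ih k (by omega)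
      have hv : Measurable fun p => sInf (toSet (state m (FF p) (X p) k).1) :=
        measurable_sInf_toSet.comp hprev
      have hzz : Measurable fun p =>
          (fun b => (state m (FF p) (X p) k).1 b &&
            decide (sInf (toSet (state m (FF p) (X p) k).1) < b)) := by
        apply measurable_pi_lambda
        intro b
        refine measurable_boolOp (· && ·) ((measurable_pi_apply b).comp hprev)
          (measurable_decide ?_)
        have he : {p | sInf (toSet (state m (FF p) (X p) k).1) < b} =
            (fun p => sInf (toSet (state m (FF p) (X p) k).1)) ⁻¹' {j | j < b} := rfl
        rw [he]; exact hv .of_discrete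
      apply measurable_pi_lambda
      intro b
      have hrw : ∀ p, (state m (FF p) (X p) (k+1)).1 b =
          refine (FF p)
            (fun b' => (state m (FF p) (X p) k).1 b' &&
              decide (sInf (toSet (state m (FF p) (X p) k).1) < b'))
            ((((Finset.range (k+1)).image (aSeq m (FF p) (X p))).powersetCard m).toList) b := by
        intro p
        rw [state_succ_fst, state_snd]
        rfl
      simp only [hrw]
      refine measurable_cond (β := List (Finset ℕ))
        (c := fun p => (((Finset.range (k+1)).image (aSeq m (FF p) (X p))).powersetCard m).toList)
        (f := fun l p => refine (FF p)
          (fun b' => (state m (FF p) (X p) k).1 b' &&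
            decide (sInf (toSet (state m (FF p) (X p) k).1) < b')) l b) ?_ ?_
      · intro t
        have hd : ∀ i, Measurable fun p => aSeq m (FF p) (X p) (min i k) := by
          intro i
          have : Measurable fun p => (state m (FF p) (X p) (min i k)).1 := ih (min i k) (by omega)
          exact measurable_sInf_toSet.comp this
        have hT : ∀ p, (((Finset.range (k+1)).image
              (fun i => aSeq m (FF p) (X p) (min i k))).powersetCard m).toList =
            (((Finset.range (k+1)).image (aSeq m (FF p) (X p))).powersetCard m).toList := by
          intro p
          have himg : Finset.image (fun i => aSeq m (FF p) (X p) (min i k)) (Finset.range (k+1))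
              = Finset.image (aSeq m (FF p) (X p)) (Finset.range (k+1)) := by
            apply Finset.image_congr
            intro i hi
            have := Finset.mem_range.mp hi
            simp only
            rw [Nat.min_eq_left (by omega)]
          simp only [himg]
        have he : {p | (((Finset.range (k+1)).image (aSeq m (FF p) (X p))).powersetCard m).toList = t}
            = {p | (fun f : ℕ → ℕ => (((Finset.range (k+1)).image f).powersetCard m).toList)
                (fun i => aSeq m (FF p) (X p) (min i k)) = t} := by
          ext p
          simp only [Set.mem_setOf_eq, hT p]
        rw [he]
        refine fibers_of_depends hd (k+1)
          (fun f : ℕ → ℕ => (((Finset.range (k+1)).image f).powersetCard m).toList) ?_ t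
        intro f g hfg
        have himg : Finset.image f (Finset.range (k+1)) = Finset.image g (Finset.range (k+1)) :=
          Finset.image_congr fun i hi => hfg i (Finset.mem_range.mp hi)
        simp only [himg]
      · intro l
        exact (measurable_pi_apply b).comp (measurable_refine hFF l hzz)

lemma measurable_aSeq (m : ℕ) {FF : α → Finset ℕ → Bool} {X : α → Cantor}
    (hFF : Measurable FF) (hX : Measurable X) (i : ℕ) :
    Measurable fun p => aSeq m (FF p) (X p) i :=
  measurable_sInf_toSet.comp (measurable_state_fst m hFF hX i)

lemma measurable_gCol (m : ℕ) {FF : α → Finset ℕ → Bool} {X : α → Cantor}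
    (hFF : Measurable FF) (hX : Measurable X) :
    Measurable fun p => gCol m (FF p) (X p) := by
  apply measurable_pi_lambda
  intro I
  have hd : ∀ i, Measurable fun p => aSeq m (FF p) (X p) i := measurable_aSeq m hFF hX
  have hc : ∀ t : Finset ℕ, MeasurableSet {p |
      insert (aSeq m (FF p) (X p) (I.sup id + 1)) (I.image (aSeq m (FF p) (X p))) = t} := by
    intro t
    refine fibers_of_depends hd (I.sup id + 2)
      (fun f : ℕ → ℕ => insert (f (I.sup id + 1)) (I.image f)) ?_ t
    intro f g hfg
    rw [hfg (I.sup id + 1) (by omega)]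
    congr 1
    refine Finset.image_congr fun i hi => ?_
    have h2 : i ≤ I.sup id := Finset.le_sup (f := id) hi
    exact hfg i (by omega)
  show Measurable fun p =>
    (FF p) (insert (aSeq m (FF p) (X p) (I.sup id + 1)) (I.image (aSeq m (FF p) (X p))))
  exact measurable_cond hc (fun t => (measurable_pi_apply t).comp hFF)

end Meas

lemma measurable_sel : ∀ n : ℕ, Measurable (Function.uncurry (Sel n)) := by
  intro n
  induction n using Nat.strong_induction_on with
  | _ n ih =>
    match n with
    | 0 => exact measurable_snd
    | 1 =>
      show Measurable fun p : (Finset ℕ → Bool) × Cantor => split p.2 (fun b => p.1 {b})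
      exact measurable_split measurable_snd
        (measurable_pi_lambda _ fun b => (measurable_pi_apply ({b} : Finset ℕ)).comp measurable_fst)
    | n+2 =>
      apply measurable_pi_lambda
      intro b
      have hG : Measurable fun p : (Finset ℕ → Bool) × Cantor => gCol (n+1) p.1 p.2 :=
        measurable_gCol (n+1) measurable_fst measurable_snd
      have hSel : Measurable fun p : (Finset ℕ → Bool) × Cantor =>
          Sel (n+1) (gCol (n+1) p.1 p.2) (fun _ => true) := by
        have := (ih (n+1) (by omega)).comp
          (hG.prodMk (measurable_const (a := fun _ : ℕ => true)))
        exact this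
      have ha := fun i => measurable_aSeq (α := (Finset ℕ → Bool) × Cantor) (n+1)
        measurable_fst measurable_snd i
      have hP : MeasurableSet {p : (Finset ℕ → Bool) × Cantor |
          ∃ i, i ≤ b ∧ Sel (n+1) (gCol (n+1) p.1 p.2) (fun _ => true) i = true ∧
            aSeq (n+1) p.1 p.2 i = b} := by
        have he : {p : (Finset ℕ → Bool) × Cantor |
            ∃ i, i ≤ b ∧ Sel (n+1) (gCol (n+1) p.1 p.2) (fun _ => true) i = true ∧
              aSeq (n+1) p.1 p.2 i = b} =
            ⋃ i, ⋃ (_ : i ≤ b),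
              ((fun p : (Finset ℕ → Bool) × Cantor =>
                Sel (n+1) (gCol (n+1) p.1 p.2) (fun _ => true) i) ⁻¹' {true}) ∩
              ((fun p : (Finset ℕ → Bool) × Cantor => aSeq (n+1) p.1 p.2 i) ⁻¹' {b}) := by
          ext p
          simp only [Set.mem_setOf_eq, Set.mem_iUnion, Set.mem_inter_iff, Set.mem_preimage,
            Set.mem_singleton_iff]
          constructor
          · rintro ⟨i, h1, h2, h3⟩; exact ⟨i, h1, h2, h3⟩
          · rintro ⟨i, h1, h2, h3⟩; exact ⟨i, h1, h2, h3⟩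
        rw [he]
        exact MeasurableSet.iUnion fun i => MeasurableSet.iUnion fun _ =>
          (((measurable_pi_apply i).comp hSel) (measurableSet_singleton true)).inter
            ((ha i) (measurableSet_singleton b))
      exact measurable_decide hP

end UR

/-- Uniform Ramsey theorem: for every `n` there is a Borel map
`S : 2^{[ℕ]^n} × [ℕ]^ω → [ℕ]^ω` such that `S(F,x)` is an infinite subset of `x`
homogeneous for `F ⊆ [ℕ]^n`. -/
theorem uniform_ramsey (n : ℕ) :
    ∃ S : (Finset ℕ → Bool) → Cantor → Cantor,
      Measurable (Function.uncurry S) ∧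
      ∀ F : Finset ℕ → Bool, (∀ s : Finset ℕ, F s = true → s.card = n) →
        ∀ x : Cantor, (toSet x).Infinite →
          toSet (S F x) ⊆ toSet x ∧ (toSet (S F x)).Infinite ∧
          ((∀ s : Finset ℕ, (s : Set ℕ) ⊆ toSet (S F x) → s.card = n → F s = true) ∨
           (∀ s : Finset ℕ, (s : Set ℕ) ⊆ toSet (S F x) → s.card = n → F s = false)) := by
  refine ⟨UR.Sel n, UR.measurable_sel n, ?_⟩
  intro F _ x hx
  exact UR.selSpec n F x hx
end

section
/- Every Fσ ideal I on ℕ is uniformly p⁺: there is a Borel function G : (2^ℕ)^ℕ → 2^ℕ such that whenever (x_n)_{n∈ℕ} is a ⊆-decreasing sequence of sets in I⁺, the set G((x_n)_n) belongs to I⁺ and G((x_n)_n) \ x_n is finite for every n. -/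
open Set

open Filter Topology

/-! Write `I = ⋃ Dₙ` with every `Dₙ` closed and hereditary: the downward closure of a closed
set is the projection of a compact set, hence closed. Given a decreasing sequence `xₙ ∉ I`, build
finite sets `t₀ = ∅ ⊆ t₁ ⊆ ⋯` with `tₙ₊₁ ⊆ tₙ ∪ xₙ` and `tₙ₊₁ ∉ Dₙ`: the truncations
`tₙ ∪ (xₙ ∩ [0, m])` converge to `tₙ ∪ xₙ ∉ Dₙ` and `Dₙ` is closed, so some truncation avoids `Dₙ`;
choosing the least such `m` makes each step Borel. Then `G = ⋃ tₙ` works: `G \ xₙ ⊆ tₙ` is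
finite, and `G ∈ Dₙ` would put `tₙ₊₁ ⊆ G` into `Dₙ`. -/

instance : OrderClosedTopology Bool := ⟨isClosed_discrete _⟩

lemma Bool.iSup_eq_true {ι : Sort*} (f : ι → Bool) : ⨆ i, f i = true ↔ ∃ i, f i = true := by
  change ⨆ i, f i = ⊤ ↔ ∃ i, f i = ⊤
  refine iSup_eq_top.trans ⟨fun h => ?_, fun ⟨i, hi⟩ b hb => ⟨i, hi ▸ hb⟩⟩
  obtain ⟨i, hi⟩ := h ⊥ bot_lt_top
  exact ⟨i, (Bool.lt_iff.1 hi).2⟩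

lemma toSet_subset_toSet {x y : Cantor} : toSet x ⊆ toSet y ↔ x ≤ y := by
  simp [toSet, Set.subset_def, Pi.le_def, Bool.le_iff_imp]

lemma toSet_bot : toSet ⊥ = ∅ := by
  ext k; simp [toSet]

lemma toSet_sup (x y : Cantor) : toSet (x ⊔ y) = toSet x ∪ toSet y := by
  ext k; simp [toSet]

lemma toSet_iSup {ι : Sort*} (f : ι → Cantor) : toSet (⨆ i, f i) = ⋃ i, toSet (f i) := by
  ext k; simp [toSet, Bool.iSup_eq_true]

lemma measurable_iSup_cantor {α ι : Type*} [MeasurableSpace α] [Countable ι]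
    {f : ι → α → Cantor} (hf : ∀ i, Measurable (f i)) : Measurable fun a => ⨆ i, f i a := by
  refine measurable_pi_iff.2 fun k => measurable_to_bool ?_
  have : (fun a => (⨆ i, f i a) k) ⁻¹' {true} =
      ⋃ i, f i ⁻¹' ((fun y : Cantor => y k) ⁻¹' {true}) := by
    ext a; simp [Bool.iSup_eq_true]
  rw [this]
  exact .iUnion fun i => hf i (measurable_pi_apply k (measurableSet_singleton true))

lemma measurable_sInf_setOf_nat {α : Type*} [MeasurableSpace α] {p : α → ℕ → Prop}
    (hp : ∀ m, MeasurableSet {a | p a m}) : Measurable fun a => sInf {m | p a m} := by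
  classical
  have hex : ∀ a, ∃ m, p a m ∨ ∀ i, ¬ p a i := fun a => by
    by_cases h : ∃ m, p a m
    · exact h.imp fun m => Or.inl
    · exact ⟨0, Or.inr (not_exists.1 h)⟩
  have heq : (fun a => sInf {m | p a m}) = fun a => Nat.find (hex a) := by
    funext a
    by_cases h : ∃ m, p a m
    · have hfind : p a (Nat.find (hex a)) :=
        (Nat.find_spec (hex a)).resolve_right (not_forall_not.2 h)
      exact le_antisymm (Nat.sInf_le hfind) (Nat.find_min' (hex a) (Or.inl (Nat.sInf_mem h)))
    · rw [not_exists] at h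
      simpa [h] using ((Nat.find_eq_zero (hex a)).2 (Or.inr h)).symm
  rw [heq]
  refine measurable_find hex fun m => ?_
  have : {a | p a m ∨ ∀ i, ¬ p a i} = {a | p a m} ∪ ⋂ i, {a | p a i}ᶜ := by
    ext a; simp
  exact this ▸ (hp m).union (.iInter fun i => (hp i).compl)

lemma subset_down (K : Set Cantor) : K ⊆ Down K := fun x hx => ⟨x, hx, subset_rfl⟩

lemma hereditary_down (K : Set Cantor) : Hereditary (Down K) :=
  fun _ ⟨z, hz, hxz⟩ _ hyx => ⟨z, hz, hyx.trans hxz⟩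

lemma Hereditary.down_subset {I K : Set Cantor} (hI : Hereditary I) (hK : K ⊆ I) : Down K ⊆ I :=
  fun _ ⟨z, hz, hxz⟩ => hI z (hK hz) _ hxz

lemma IsClosed.down {K : Set Cantor} (hK : IsClosed K) : IsClosed (Down K) := by
  have : Down K = Prod.fst '' ({p : Cantor × Cantor | p.1 ≤ p.2} ∩ Prod.snd ⁻¹' K) := by
    ext x
    simp [Down, toSet_subset_toSet, and_comm]
  rw [this]
  exact ((isClosed_le_prod.inter (hK.preimage continuous_snd)).isCompact.image
    continuous_fst).isClosed

lemma IsFsigma.exists_closed_hereditary {I : Set Cantor} (hI : Hereditary I) (h : IsFsigma I) :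
    ∃ D : ℕ → Set Cantor, (∀ n, IsClosed (D n)) ∧ (∀ n, Hereditary (D n)) ∧ I = ⋃ n, D n := by
  obtain ⟨C, hC, rfl⟩ := h
  refine ⟨fun n => Down (C n), fun n => (hC n).down, fun n => hereditary_down _,
    subset_antisymm (iUnion_mono fun n => subset_down _) (iUnion_subset fun n => ?_)⟩
  exact hI.down_subset (subset_iUnion C n)

def truncate (x : Cantor) (m : ℕ) : Cantor := fun k => x k && decide (k ≤ m)

lemma toSet_truncate (x : Cantor) (m : ℕ) : toSet (truncate x m) = toSet x ∩ Iic m := by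
  ext k; simp [toSet, truncate]

lemma truncate_le (x : Cantor) (m : ℕ) : truncate x m ≤ x := by
  simp [← toSet_subset_toSet, toSet_truncate]

lemma continuous_sup_truncate (m : ℕ) :
    Continuous fun p : Cantor × Cantor => p.1 ⊔ truncate p.2 m :=
  continuous_pi fun k => by
    have hk : Continuous fun b : Bool × Bool => b.1 ⊔ (b.2 && decide (k ≤ m)) :=
      continuous_of_discreteTopology
    exact hk.comp (f := fun p : Cantor × Cantor => (p.1 k, p.2 k)) (by fun_prop)

lemma tendsto_sup_truncate (t x : Cantor) :
    Tendsto (fun m => t ⊔ truncate x m) atTop (𝓝 (t ⊔ x)) :=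
  tendsto_pi_nhds.2 fun k => tendsto_atTop_of_eventually_const (i₀ := k) fun m hm => by
    simp [truncate, hm]

/-- When no truncation avoids `D`, the junk value `sInf ∅ = 0` keeps the map Borel. -/
noncomputable def extendOutside (D : Set Cantor) (t x : Cantor) : Cantor :=
  t ⊔ truncate x (sInf {m | t ⊔ truncate x m ∉ D})

section Extend

variable {D : Set Cantor} {t x : Cantor}

lemma le_extendOutside : t ≤ extendOutside D t x := le_sup_left

lemma extendOutside_le : extendOutside D t x ≤ t ⊔ x := sup_le_sup_left (truncate_le _ _) _

lemma extendOutside_not_mem (hD : IsClosed D) (h : t ⊔ x ∉ D) : extendOutside D t x ∉ D :=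
  Nat.sInf_mem (((tendsto_sup_truncate t x).eventually (hD.isOpen_compl.mem_nhds h)).exists)

lemma finite_toSet_extendOutside (ht : (toSet t).Finite) :
    (toSet (extendOutside D t x)).Finite := by
  rw [extendOutside, toSet_sup, toSet_truncate]
  exact ht.union ((finite_Iic _).subset inter_subset_right)

lemma measurable_extendOutside (hD : MeasurableSet D) :
    Measurable fun p : Cantor × Cantor => extendOutside D p.1 p.2 := by
  have hF : Measurable fun q : (Cantor × Cantor) × ℕ => q.1.1 ⊔ truncate q.1.2 q.2 :=
    measurable_from_prod_countable_left fun m => (continuous_sup_truncate m).measurable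
  have hm : Measurable fun p : Cantor × Cantor => sInf {m | p.1 ⊔ truncate p.2 m ∉ D} :=
    measurable_sInf_setOf_nat fun m => (continuous_sup_truncate m).measurable hD.compl
  exact hF.comp (measurable_id.prodMk hm)

end Extend

noncomputable def chainOutside (D : ℕ → Set Cantor) (xs : ℕ → Cantor) : ℕ → Cantor
  | 0 => ⊥
  | n + 1 => extendOutside (D n) (chainOutside D xs n) (xs n)

section ChainOutside

variable {D : ℕ → Set Cantor} {xs : ℕ → Cantor}

lemma measurable_chainOutside (hD : ∀ n, MeasurableSet (D n)) (n : ℕ) :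
    Measurable fun xs => chainOutside D xs n := by
  induction n with
  | zero => exact measurable_const
  | succ n ih =>
    exact (measurable_extendOutside (hD n)).comp (ih.prodMk (measurable_pi_apply n))

lemma monotone_chainOutside : Monotone (chainOutside D xs) :=
  monotone_nat_of_le_succ fun _ => le_extendOutside

lemma finite_toSet_chainOutside (D : ℕ → Set Cantor) (xs : ℕ → Cantor) (n : ℕ) :
    (toSet (chainOutside D xs n)).Finite := by
  induction n with
  | zero => simp [chainOutside, toSet_bot]
  | succ n ih => exact finite_toSet_extendOutside ih

lemma chainOutside_succ_not_mem {n : ℕ} (hD : IsClosed (D n)) (hDh : Hereditary (D n))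
    (hx : xs n ∉ D n) :
    chainOutside D xs (n + 1) ∉ D n :=
  extendOutside_not_mem hD fun h => hx (hDh _ h _ (toSet_subset_toSet.2 le_sup_right))

lemma chainOutside_le_sup (hxs : Antitone xs) {n m : ℕ} (hnm : n ≤ m) :
    chainOutside D xs m ≤ chainOutside D xs n ⊔ xs n := by
  induction m, hnm using Nat.le_induction with
  | base => exact le_sup_left
  | succ m hnm ih =>
    calc chainOutside D xs (m + 1) ≤ chainOutside D xs m ⊔ xs m := extendOutside_le
      _ ≤ chainOutside D xs n ⊔ xs n := sup_le ih (le_sup_of_le_right (hxs hnm))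

lemma iSup_chainOutside_le_sup (hxs : Antitone xs) (n : ℕ) :
    ⨆ m, chainOutside D xs m ≤ chainOutside D xs n ⊔ xs n :=
  iSup_le fun m => (le_total m n).elim (fun h => le_sup_of_le_left (monotone_chainOutside h))
    (chainOutside_le_sup hxs)

lemma finite_toSet_iSup_chainOutside_diff (hxs : Antitone xs) (n : ℕ) :
    (toSet (⨆ m, chainOutside D xs m) \ toSet (xs n)).Finite := by
  refine (finite_toSet_chainOutside D xs n).subset (sdiff_subset_iff.2 ?_)
  rw [union_comm, ← toSet_sup, toSet_subset_toSet]
  exact iSup_chainOutside_le_sup hxs n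

end ChainOutside

/-- Every `Fσ` ideal on `ℕ` is uniformly `p⁺`. -/
theorem fsigma_unif_pplus (I : Set Cantor) (hI : IsIdeal I) (hFs : IsFsigma I) :
    UnifPplus I := by
  obtain ⟨D, hDc, hDh, rfl⟩ := hFs.exists_closed_hereditary hI.1
  refine ⟨fun xs => ⨆ n, chainOutside D xs n,
    measurable_iSup_cantor (measurable_chainOutside fun n => (hDc n).measurableSet),
    fun xs hxs hdec => ⟨fun hG => ?_, fun n => ?_⟩⟩
  · obtain ⟨n, hn⟩ := mem_iUnion.1 hG
    exact chainOutside_succ_not_mem (hDc n) (hDh n) (fun h => hxs n (mem_iUnion_of_mem n h))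
      (hDh n _ hn _ (toSet_subset_toSet.2 (le_iSup _ (n + 1))))
  · have hanti : Antitone xs :=
      antitone_nat_of_succ_le fun n => toSet_subset_toSet.1 (hdec n)
    exact finite_toSet_iSup_chainOutside_diff hanti n
end

section
/- If an Fσ ideal I on ℕ is q⁺, then it is uniformly q⁺: there is a Borel function F : 2^ℕ × (2^ℕ)^ℕ → 2^ℕ such that whenever x ∈ I⁺ and (t_n)_{n∈ℕ} is a partition of x into finite sets, the set F(x,(t_n)_n) is a subset of x, belongs to I⁺, and meets each t_n in at most one point. -/
open Set

namespace QPP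
open Classical

noncomputable def chi (s : Finset ℕ) : Cantor := fun i => decide (i ∈ s)

lemma toSet_chi (s : Finset ℕ) : toSet (chi s) = ↑s := by
  ext i; simp [toSet, chi]

noncomputable def decF (c : ℕ) : Finset ℕ := (Encodable.decode (α := Finset ℕ) c).getD ∅

lemma decF_encode (s : Finset ℕ) : decF (Encodable.encode s) = s := by
  simp [decF]

def Approx (Y : Cantor) (m : ℕ) : Finset ℕ := (Finset.Iic m).filter (fun i => Y i = true)

lemma mem_Approx {Y m i} : i ∈ Approx Y m ↔ i ≤ m ∧ Y i = true := by
  simp [Approx]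

lemma down_hered {K : Set Cantor} : ∀ a ∈ Down K, ∀ b : Cantor, toSet b ⊆ toSet a → b ∈ Down K := by
  rintro a ⟨y, hy, hay⟩ b hba
  exact ⟨y, hy, hba.trans hay⟩

lemma down_closed {K : Set Cantor} (hK : IsClosed K) : IsClosed (Down K) := by
  have himg : Down K = (fun q : Cantor × Cantor => fun n => q.1 n && q.2 n) '' (K ×ˢ (univ : Set Cantor)) := by
    ext x
    constructor
    · rintro ⟨y, hy, hxy⟩
      refine ⟨(y, x), ⟨hy, trivial⟩, ?_⟩
      funext n
      show (y n && x n) = x n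
      rcases hxn : x n with _ | _
      · simp
      · have hyn : y n = true := hxy hxn
        simp [hyn]
    · rintro ⟨⟨y, z⟩, ⟨hy, -⟩, rfl⟩
      refine ⟨y, hy, ?_⟩
      intro n hn
      simp only [toSet, mem_setOf_eq, Bool.and_eq_true] at hn ⊢
      exact hn.1
  rw [himg]
  have hcont : Continuous (fun q : Cantor × Cantor => fun n => q.1 n && q.2 n) := by
    refine continuous_pi fun n => ?_
    have h1 : Continuous fun q : Cantor × Cantor => (q.1 n, q.2 n) :=
      ((continuous_apply n).comp continuous_fst).prodMk ((continuous_apply n).comp continuous_snd)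
    exact (continuous_of_discreteTopology (f := fun b : Bool × Bool => b.1 && b.2)).comp h1
  exact ((hK.isCompact.prod isCompact_univ).image hcont).isClosed

lemma closed_limit {D : Set Cantor} (hD : IsClosed D) {Y : Cantor}
    (h : ∀ m, chi (Approx Y m) ∈ D) : Y ∈ D := by
  have htend : Filter.Tendsto (fun m => chi (Approx Y m)) Filter.atTop (nhds Y) := by
    rw [tendsto_pi_nhds]
    intro i
    have : ∀ m ≥ i, chi (Approx Y m) i = Y i := by
      intro m him
      rcases hYi : Y i with _ | _ <;> simp [chi, mem_Approx, him, hYi]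
    exact Filter.Tendsto.congr' (by filter_upwards [Filter.eventually_ge_atTop i] using fun m hm => (this m hm).symm) tendsto_const_nhds
  exact hD.mem_of_tendsto htend (Filter.Eventually.of_forall h)


def SelF (t : ℕ → Cantor) (s : Finset ℕ) : Prop :=
  ∀ i ∈ s, ∀ j ∈ s, i ≠ j → ∀ n, ¬(t n i = true ∧ t n j = true)

lemma SelF_mono {t : ℕ → Cantor} {s w : Finset ℕ} (h : s ⊆ w) (hw : SelF t w) : SelF t s :=
  fun i hi j hj hij n => hw i (h hi) j (h hj) hij n

def GoodSet (D : ℕ → Set Cantor) (x : Cantor) (t : ℕ → Cantor) (u : Finset ℕ) : Prop :=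
  ∀ k, ∃ w : Finset ℕ, u ⊆ w ∧ (↑w : Set ℕ) ⊆ toSet x ∧ SelF t w ∧ chi w ∉ D k

def Phi (D : ℕ → Set Cantor) (k : ℕ) (u : Finset ℕ) (p : Cantor × (ℕ → Cantor)) (c : ℕ) : Prop :=
  u ⊆ decF c ∧ (↑(decF c) : Set ℕ) ⊆ toSet p.1 ∧ SelF p.2 (decF c) ∧ chi (decF c) ∉ D k ∧
    GoodSet D p.1 p.2 (decF c)

noncomputable def g (D : ℕ → Set Cantor) : ℕ → Cantor × (ℕ → Cantor) → ℕ
  | 0, _ => Encodable.encode (∅ : Finset ℕ)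
  | (k+1), p => if h : ∃ c, Phi D k (decF (g D k p)) p c then Nat.find h else g D k p

noncomputable def Fn (D : ℕ → Set Cantor) (p : Cantor × (ℕ → Cantor)) : Cantor :=
  fun n => decide (∃ k, n ∈ decF (g D k p))

-- measurability lemmas
lemma meas_coord1 (i : ℕ) : Measurable fun p : Cantor × (ℕ → Cantor) => p.1 i :=
  (measurable_pi_apply i).comp measurable_fst

lemma meas_coord2 (n i : ℕ) : Measurable fun p : Cantor × (ℕ → Cantor) => p.2 n i :=
  (measurable_pi_apply i).comp ((measurable_pi_apply n).comp measurable_snd)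

lemma measSet_subx (s : Finset ℕ) : MeasurableSet {p : Cantor × (ℕ → Cantor) | (↑s : Set ℕ) ⊆ toSet p.1} := by
  have : {p : Cantor × (ℕ → Cantor) | (↑s : Set ℕ) ⊆ toSet p.1} = ⋂ i ∈ s, {p | p.1 i = true} := by
    ext p
    simp only [mem_setOf_eq, mem_iInter]
    constructor
    · intro h i hi; exact h hi
    · intro h i hi; exact h i hi
  rw [this]
  exact MeasurableSet.biInter s.countable_toSet fun i _ => (meas_coord1 i) (MeasurableSet.singleton true)

lemma measSet_self (s : Finset ℕ) : MeasurableSet {p : Cantor × (ℕ → Cantor) | SelF p.2 s} := by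
  have : {p : Cantor × (ℕ → Cantor) | SelF p.2 s} =
      ⋂ i ∈ s, ⋂ j ∈ s, ⋂ n : ℕ, {p | i ≠ j → ¬(p.2 n i = true ∧ p.2 n j = true)} := by
    ext p
    simp only [mem_setOf_eq, mem_iInter, SelF]
    constructor
    · intro h i hi j hj n hij; exact h i hi j hj hij n
    · intro h i hi j hj hij n; exact h i hi j hj n hij
  rw [this]
  refine MeasurableSet.biInter s.countable_toSet fun i _ => ?_
  refine MeasurableSet.biInter s.countable_toSet fun j _ => ?_
  refine MeasurableSet.iInter fun n => ?_
  by_cases hij : i = j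
  · have : {p : Cantor × (ℕ → Cantor) | i ≠ j → ¬(p.2 n i = true ∧ p.2 n j = true)} = univ := by
      ext p; simp [hij]
    rw [this]; exact MeasurableSet.univ
  · have : {p : Cantor × (ℕ → Cantor) | i ≠ j → ¬(p.2 n i = true ∧ p.2 n j = true)} =
        ({p | p.2 n i = true} ∩ {p | p.2 n j = true})ᶜ := by
      ext p; simp [hij]
    rw [this]
    exact (((meas_coord2 n i) (MeasurableSet.singleton true)).inter ((meas_coord2 n j) (MeasurableSet.singleton true))).compl

lemma measSet_good (D : ℕ → Set Cantor) (s : Finset ℕ) :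
    MeasurableSet {p : Cantor × (ℕ → Cantor) | GoodSet D p.1 p.2 s} := by
  have : {p : Cantor × (ℕ → Cantor) | GoodSet D p.1 p.2 s} =
      ⋂ k : ℕ, ⋃ w : Finset ℕ, ⋃ (_ : s ⊆ w ∧ chi w ∉ D k),
        ({p : Cantor × (ℕ → Cantor) | (↑w : Set ℕ) ⊆ toSet p.1} ∩ {p | SelF p.2 w}) := by
    ext p
    simp only [mem_setOf_eq, mem_iInter, mem_iUnion, mem_inter_iff, GoodSet]
    constructor
    · intro h k; obtain ⟨w, h1, h2, h3, h4⟩ := h k; exact ⟨w, ⟨h1, h4⟩, h2, h3⟩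
    · intro h k; obtain ⟨w, ⟨h1, h4⟩, h2, h3⟩ := h k; exact ⟨w, h1, h2, h3, h4⟩
  rw [this]
  refine MeasurableSet.iInter fun k => ?_
  refine MeasurableSet.iUnion fun w => ?_
  refine MeasurableSet.iUnion fun _ => ?_
  exact (measSet_subx w).inter (measSet_self w)

lemma measSet_Phi (D : ℕ → Set Cantor) (k : ℕ) (u : Finset ℕ) (c : ℕ) :
    MeasurableSet {p : Cantor × (ℕ → Cantor) | Phi D k u p c} := by
  have : {p : Cantor × (ℕ → Cantor) | Phi D k u p c} =
      {_p : Cantor × (ℕ → Cantor) | u ⊆ decF c} ∩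
        ({p : Cantor × (ℕ → Cantor) | (↑(decF c) : Set ℕ) ⊆ toSet p.1} ∩
         ({p | SelF p.2 (decF c)} ∩
          ({_p : Cantor × (ℕ → Cantor) | chi (decF c) ∉ D k} ∩
           {p | GoodSet D p.1 p.2 (decF c)}))) := by
    ext p
    simp only [mem_setOf_eq, mem_inter_iff, Phi]
  rw [this]
  exact (MeasurableSet.const _).inter ((measSet_subx _).inter ((measSet_self _).inter
    ((MeasurableSet.const _).inter (measSet_good D _))))


lemma meas_find {α : Type*} [MeasurableSpace α] {f : α → ℕ} (hf : Measurable f)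
    {Q : ℕ → α → ℕ → Prop} (hQ : ∀ c1 c, MeasurableSet {p | Q c1 p c}) :
    Measurable (fun p => if h : ∃ c, Q (f p) p c then Nat.find h else f p) := by
  refine measurable_to_countable' fun c0 => ?_
  have hmemQ : ∀ c, MeasurableSet {p | Q (f p) p c} := by
    intro c
    have : {p | Q (f p) p c} = ⋃ c1 : ℕ, (f ⁻¹' {c1}) ∩ {p | Q c1 p c} := by
      ext p; simp
    rw [this]
    exact MeasurableSet.iUnion fun c1 => (hf (MeasurableSet.singleton c1)).inter (hQ c1 c)
  have hset : (fun p => if h : ∃ c, Q (f p) p c then Nat.find h else f p) ⁻¹' {c0} =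
      ({p | Q (f p) p c0} ∩ ⋂ c : ℕ, {p | c < c0 → ¬ Q (f p) p c}) ∪
      ((⋂ c : ℕ, {p | ¬ Q (f p) p c}) ∩ f ⁻¹' {c0}) := by
    ext p
    simp only [mem_preimage, mem_singleton_iff, mem_union, mem_inter_iff, mem_iInter,
      mem_setOf_eq]
    by_cases h : ∃ c, Q (f p) p c
    · rw [dif_pos h]
      constructor
      · intro he
        left
        rw [Nat.find_eq_iff h] at he
        exact ⟨he.1, fun c hc => he.2 c hc⟩
      · rintro (⟨h1, h2⟩ | ⟨h1, -⟩)
        · rw [Nat.find_eq_iff h]; exact ⟨h1, fun c hc => h2 c hc⟩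
        · exact absurd h (by push_neg; intro c; exact h1 c)
    · rw [dif_neg h]
      push_neg at h
      constructor
      · intro he; right; exact ⟨h, he⟩
      · rintro (⟨h1, -⟩ | ⟨-, h2⟩)
        · exact absurd h1 (h c0)
        · exact h2
  rw [hset]
  refine MeasurableSet.union ?_ ?_
  · refine (hmemQ c0).inter (MeasurableSet.iInter fun c => ?_)
    by_cases hc : c < c0
    · have : {p | c < c0 → ¬ Q (f p) p c} = {p | Q (f p) p c}ᶜ := by
        ext p; simp [hc]
      rw [this]; exact (hmemQ c).compl
    · have : {p | c < c0 → ¬ Q (f p) p c} = univ := by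
        ext p; simp [hc]
      rw [this]; exact MeasurableSet.univ
  · exact (MeasurableSet.iInter fun c => (hmemQ c).compl).inter (hf (MeasurableSet.singleton c0))

lemma meas_g (D : ℕ → Set Cantor) : ∀ k, Measurable (g D k) := by
  intro k
  induction k with
  | zero => exact measurable_const
  | succ k ih =>
      have : g D (k+1) = fun p =>
          if h : ∃ c, Phi D k (decF (g D k p)) p c then Nat.find h else g D k p := rfl
      rw [this]
      exact meas_find ih (fun c1 c => measSet_Phi D k (decF c1) c)

lemma meas_Fn (D : ℕ → Set Cantor) : Measurable (Fn D) := by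
  refine measurable_pi_lambda _ fun n => ?_
  refine measurable_to_countable' fun b => ?_
  have hS : MeasurableSet {p : Cantor × (ℕ → Cantor) | ∃ k, n ∈ decF (g D k p)} := by
    have : {p : Cantor × (ℕ → Cantor) | ∃ k, n ∈ decF (g D k p)} =
        ⋃ k : ℕ, (g D k) ⁻¹' {c | n ∈ decF c} := by
      ext p; simp
    rw [this]
    exact MeasurableSet.iUnion fun k => (meas_g D k) (by trivial)
  cases b
  · have : (fun p => Fn D p n) ⁻¹' {false} = {p : Cantor × (ℕ → Cantor) | ∃ k, n ∈ decF (g D k p)}ᶜ := by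
      ext p; simp [Fn]
    rw [this]; exact hS.compl
  · have : (fun p => Fn D p n) ⁻¹' {true} = {p : Cantor × (ℕ → Cantor) | ∃ k, n ∈ decF (g D k p)} := by
      ext p; simp [Fn]
    rw [this]; exact hS


section Core

variable {I : Set Cantor} {C : ℕ → Set Cantor}

lemma D_sub_I (hI : IsIdeal I) (hIC : I = ⋃ n, C n) (k : ℕ) : Down (C k) ⊆ I := by
  rintro a ⟨y, hy, hay⟩
  have hyI : y ∈ I := by rw [hIC]; exact mem_iUnion.2 ⟨k, hy⟩
  exact hI.1 y hyI a hay

lemma goodOfY (hI : IsIdeal I) (hC : ∀ n, IsClosed (C n)) (hIC : I = ⋃ n, C n)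
    {x Y : Cantor} {t : ℕ → Cantor} (hYx : toSet Y ⊆ toSet x) (hYI : Y ∉ I)
    (hYsel : ∀ n, (toSet Y ∩ toSet (t n)).Subsingleton)
    {u : Finset ℕ} (huY : (↑u : Set ℕ) ⊆ toSet Y) (k : ℕ) :
    ∃ w : Finset ℕ, u ⊆ w ∧ (↑w : Set ℕ) ⊆ toSet x ∧ SelF t w ∧
      chi w ∉ Down (C k) ∧ (↑w : Set ℕ) ⊆ toSet Y := by
  have hYD : Y ∉ Down (C k) := fun h => hYI (D_sub_I hI hIC k h)
  have hesc : ∃ m, chi (Approx Y m) ∉ Down (C k) := by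
    by_contra h
    push_neg at h
    exact hYD (closed_limit (down_closed (hC k)) h)
  obtain ⟨m0, hm0⟩ := hesc
  set m := max m0 (u.sup id) with hm
  refine ⟨Approx Y m, ?_, ?_, ?_, ?_, ?_⟩
  · intro i hi
    have hiY : Y i = true := huY (Finset.mem_coe.2 hi)
    have him : i ≤ m := le_trans (Finset.le_sup (f := id) hi) (le_max_right _ _)
    exact mem_Approx.2 ⟨him, hiY⟩
  · intro i hi
    obtain ⟨-, hiY⟩ := mem_Approx.1 (Finset.mem_coe.1 hi)
    exact hYx hiY
  · intro i hi j hj hij n ⟨hti, htj⟩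
    obtain ⟨-, hiY⟩ := mem_Approx.1 hi
    obtain ⟨-, hjY⟩ := mem_Approx.1 hj
    exact hij (hYsel n ⟨hiY, hti⟩ ⟨hjY, htj⟩)
  · intro hmem
    apply hm0
    refine down_hered _ hmem _ ?_
    rw [toSet_chi, toSet_chi]
    intro i hi
    obtain ⟨him, hiY⟩ := mem_Approx.1 (Finset.mem_coe.1 hi)
    exact Finset.mem_coe.2 (mem_Approx.2 ⟨le_trans him (le_max_left _ _), hiY⟩)
  · intro i hi
    exact (mem_Approx.1 (Finset.mem_coe.1 hi)).2

lemma extendY (hI : IsIdeal I) (hq : Qplus I)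
    {x : Cantor} {t : ℕ → Cantor} (hx : x ∉ I) (hpart : FinPartition x t)
    (hIC : I = ⋃ n, C n)
    {u : Finset ℕ} (hux : (↑u : Set ℕ) ⊆ toSet x) (husel : SelF t u)
    (hgood : GoodSet (fun k => Down (C k)) x t u) :
    ∃ Y : Cantor, toSet Y ⊆ toSet x ∧ Y ∉ I ∧
      (∀ n, (toSet Y ∩ toSet (t n)).Subsingleton) ∧ (↑u : Set ℕ) ⊆ toSet Y := by
  classical
  obtain ⟨hfin, hdisj, hunion⟩ := hpart
  set B : Set ℕ := {n | ∃ j ∈ u, t n j = true} with hB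
  set V : Set ℕ := ⋃ n ∈ B, toSet (t n) with hV
  set zS : Set ℕ := ↑u ∪ (toSet x \ V) with hzS
  set z : Cantor := fun i => decide (i ∈ zS) with hz
  have hzr : toSet z = zS := by ext i; simp [toSet, hz]
  have huV : (↑u : Set ℕ) ⊆ V := by
    intro i hi
    have hix : i ∈ toSet x := hux hi
    rw [← hunion] at hix
    obtain ⟨n, hn⟩ := mem_iUnion.1 hix
    exact mem_biUnion (⟨i, Finset.mem_coe.1 hi, hn⟩ : n ∈ B) hn
  have hzx : zS ⊆ toSet x := by
    rintro i (hi | ⟨hi, -⟩)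
    · exact hux hi
    · exact hi
  have hzI : z ∉ I := by
    intro hzmem
    rw [hIC] at hzmem
    obtain ⟨m, hm⟩ := mem_iUnion.1 hzmem
    obtain ⟨w, huw, hwx, hwsel, hwD⟩ := hgood m
    apply hwD
    refine down_hered z ⟨z, hm, subset_rfl⟩ (chi w) ?_
    rw [toSet_chi, hzr]
    intro i hi
    have hiw : i ∈ w := Finset.mem_coe.1 hi
    by_cases hiV : i ∈ V
    · obtain ⟨n, hnB, hitn⟩ := by
        simpa using (mem_iUnion₂.1 hiV)
      obtain ⟨j, hju, htj⟩ := hnB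
      by_cases hij : i = j
      · exact Or.inl (by rw [hij]; exact Finset.mem_coe.2 hju)
      · exact absurd ⟨hitn, htj⟩ (hwsel i hiw j (huw hju) hij n)
    · exact Or.inr ⟨hwx hi, hiV⟩
  -- the partition P of z
  set P : ℕ → Cantor := fun n =>
    match n with
    | 0 => chi u
    | (m+1) => if m ∈ B then (fun _ => false) else t m with hP
  have hP0 : toSet (P 0) = ↑u := toSet_chi u
  have hPsucc_mem : ∀ m ∈ B, toSet (P (m+1)) = ∅ := by
    intro m hm; simp only [hP, if_pos hm]; ext i; simp [toSet]
  have hPsucc_nmem : ∀ m, m ∉ B → P (m+1) = t m := by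
    intro m hm; simp only [hP, if_neg hm]
  have htnV : ∀ n ∉ B, Disjoint (toSet (t n)) V := by
    intro n hn
    rw [Set.disjoint_left]
    intro i hit hiV
    obtain ⟨m, hmB, him⟩ := by simpa using (mem_iUnion₂.1 hiV)
    have hmn : n ≠ m := fun h => hn (h ▸ hmB)
    exact Set.disjoint_left.1 (hdisj n m hmn) hit him
  have hPfin : ∀ n, (toSet (P n)).Finite := by
    intro n
    match n with
    | 0 => rw [hP0]; exact u.finite_toSet
    | (m+1) =>
        by_cases hm : m ∈ B
        · rw [hPsucc_mem m hm]; exact finite_empty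
        · rw [hPsucc_nmem m hm]; exact hfin m
  have hPdisj : ∀ m n, m ≠ n → Disjoint (toSet (P m)) (toSet (P n)) := by
    have key : ∀ m n, m ≠ n → m = 0 ∨ (m ≠ 0 ∧ n = 0) ∨ (m ≠ 0 ∧ n ≠ 0) := by
      intro m n _
      by_cases hm : m = 0
      · exact Or.inl hm
      · by_cases hn : n = 0
        · exact Or.inr (Or.inl ⟨hm, hn⟩)
        · exact Or.inr (Or.inr ⟨hm, hn⟩)
    have base : ∀ n, Disjoint (toSet (P 0)) (toSet (P (n+1))) := by
      intro n
      by_cases hn : n ∈ B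
      · rw [hPsucc_mem n hn]; exact disjoint_empty _
      · rw [hP0, hPsucc_nmem n hn]
        rw [Set.disjoint_left]
        intro i hiu hit
        exact Set.disjoint_left.1 (htnV n hn) hit (huV hiu)
    intro m n hmn
    rcases key m n hmn with hm0 | ⟨hm0, hn0⟩ | ⟨hm0, hn0⟩
    · subst hm0
      obtain ⟨n', rfl⟩ := Nat.exists_eq_succ_of_ne_zero (fun h => hmn h.symm)
      exact base n'
    · subst hn0
      obtain ⟨m', rfl⟩ := Nat.exists_eq_succ_of_ne_zero hm0
      exact (base m').symm
    · obtain ⟨m', rfl⟩ := Nat.exists_eq_succ_of_ne_zero hm0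
      obtain ⟨n', rfl⟩ := Nat.exists_eq_succ_of_ne_zero hn0
      have hmn' : m' ≠ n' := fun h => hmn (by rw [h])
      by_cases hm : m' ∈ B
      · rw [hPsucc_mem m' hm]; exact empty_disjoint _
      · by_cases hn : n' ∈ B
        · rw [hPsucc_mem n' hn]; exact disjoint_empty _
        · rw [hPsucc_nmem m' hm, hPsucc_nmem n' hn]; exact hdisj m' n' hmn'
  have hPunion : (⋃ n, toSet (P n)) = toSet z := by
    rw [hzr]
    ext i
    constructor
    · intro hi
      obtain ⟨n, hn⟩ := mem_iUnion.1 hi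
      match n with
      | 0 => exact Or.inl (hP0 ▸ hn)
      | (m+1) =>
          by_cases hm : m ∈ B
          · rw [hPsucc_mem m hm] at hn; exact absurd hn (notMem_empty i)
          · rw [hPsucc_nmem m hm] at hn
            refine Or.inr ⟨?_, ?_⟩
            · rw [← hunion]; exact mem_iUnion.2 ⟨m, hn⟩
            · exact fun hiV => Set.disjoint_left.1 (htnV m hm) hn hiV
    · rintro (hi | ⟨hix, hiV⟩)
      · exact mem_iUnion.2 ⟨0, hP0 ▸ hi⟩
      · rw [← hunion] at hix
        obtain ⟨n, hn⟩ := mem_iUnion.1 hix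
        have hnB : n ∉ B := fun h => hiV (mem_biUnion h hn)
        exact mem_iUnion.2 ⟨n + 1, by rw [hPsucc_nmem n hnB]; exact hn⟩
  obtain ⟨y, hyz, hyI, hysel⟩ := hq z P hzI ⟨hPfin, hPdisj, hPunion⟩
  set Y : Cantor := fun i => chi u i || y i with hY
  have hYr : toSet Y = ↑u ∪ toSet y := by
    ext i; simp [toSet, hY, chi]
  have hyzS : toSet y ⊆ zS := by rw [← hzr]; exact hyz
  refine ⟨Y, ?_, ?_, ?_, ?_⟩
  · rw [hYr]
    rintro i (hi | hi)
    · exact hux hi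
    · exact hzx (hyzS hi)
  · intro hmem
    exact hyI (hI.1 Y hmem y (by rw [hYr]; exact subset_union_right))
  · intro n
    by_cases hnB : n ∈ B
    · have hsub : toSet Y ∩ toSet (t n) ⊆ ↑u := by
        rintro i ⟨hiY, hit⟩
        rw [hYr] at hiY
        rcases hiY with hiu | hiy
        · exact hiu
        · rcases hyzS hiy with hiu | ⟨-, hiV⟩
          · exact hiu
          · exact absurd (mem_biUnion hnB hit) hiV
      intro i hi j hj
      by_contra hij
      have hiu : i ∈ u := Finset.mem_coe.1 (hsub hi)
      have hju : j ∈ u := Finset.mem_coe.1 (hsub hj)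
      exact husel i hiu j hju hij n ⟨hi.2, hj.2⟩
    · have hsub : toSet Y ∩ toSet (t n) ⊆ toSet y ∩ toSet (P (n+1)) := by
        rintro i ⟨hiY, hit⟩
        rw [hYr] at hiY
        rcases hiY with hiu | hiy
        · exact absurd (⟨i, Finset.mem_coe.1 hiu, hit⟩ : n ∈ B) hnB
        · exact ⟨hiy, by rw [hPsucc_nmem n hnB]; exact hit⟩
      exact (hysel (n+1)).anti hsub
  · rw [hYr]; exact subset_union_left

lemma good_base (hI : IsIdeal I) (hC : ∀ n, IsClosed (C n)) (hIC : I = ⋃ n, C n)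
    (hq : Qplus I) {x : Cantor} {t : ℕ → Cantor} (hx : x ∉ I) (hpart : FinPartition x t) :
    GoodSet (fun k => Down (C k)) x t ∅ := by
  obtain ⟨y, hyx, hyI, hysel⟩ := hq x t hx hpart
  intro k
  obtain ⟨w, h1, h2, h3, h4, -⟩ := goodOfY hI hC hIC hyx hyI hysel
    (u := ∅) (by simp) k
  exact ⟨w, h1, h2, h3, h4⟩

lemma stepExists (hI : IsIdeal I) (hC : ∀ n, IsClosed (C n)) (hIC : I = ⋃ n, C n)
    (hq : Qplus I) {x : Cantor} {t : ℕ → Cantor} (hx : x ∉ I) (hpart : FinPartition x t)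
    {u : Finset ℕ} (hux : (↑u : Set ℕ) ⊆ toSet x) (husel : SelF t u)
    (hgood : GoodSet (fun k => Down (C k)) x t u) (k : ℕ) :
    ∃ c, Phi (fun k => Down (C k)) k u (x, t) c := by
  obtain ⟨Y, hYx, hYI, hYsel, huY⟩ := extendY hI hq hx hpart hIC hux husel hgood
  obtain ⟨w, h1, h2, h3, h4, h5⟩ := goodOfY hI hC hIC hYx hYI hYsel huY k
  refine ⟨Encodable.encode w, ?_⟩
  have hd : decF (Encodable.encode w) = w := decF_encode w
  rw [Phi, hd]
  refine ⟨h1, h2, h3, h4, ?_⟩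
  intro k'
  obtain ⟨w', g1, g2, g3, g4, -⟩ := goodOfY hI hC hIC hYx hYI hYsel h5 k'
  exact ⟨w', g1, g2, g3, g4⟩

lemma invariant (hI : IsIdeal I) (hC : ∀ n, IsClosed (C n)) (hIC : I = ⋃ n, C n)
    (hq : Qplus I) {x : Cantor} {t : ℕ → Cantor} (hx : x ∉ I) (hpart : FinPartition x t) :
    ∀ k, (↑(decF (g (fun k => Down (C k)) k (x, t))) : Set ℕ) ⊆ toSet x ∧
      SelF t (decF (g (fun k => Down (C k)) k (x, t))) ∧
      GoodSet (fun k => Down (C k)) x t (decF (g (fun k => Down (C k)) k (x, t))) ∧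
      (∀ k', k = k' + 1 →
        decF (g (fun k => Down (C k)) k' (x, t)) ⊆ decF (g (fun k => Down (C k)) k (x, t)) ∧
        chi (decF (g (fun k => Down (C k)) k (x, t))) ∉ Down (C k')) := by
  set D : ℕ → Set Cantor := fun k => Down (C k) with hD
  intro k
  induction k with
  | zero =>
      rw [show g D 0 (x, t) = Encodable.encode (∅ : Finset ℕ) from rfl, decF_encode]
      refine ⟨by simp, ?_, good_base hI hC hIC hq hx hpart, ?_⟩
      · intro i hi; exact absurd hi (Finset.notMem_empty i)
      · intro k' hk'; exact absurd hk' (by omega)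
  | succ k ih =>
      obtain ⟨ihx, ihsel, ihgood, -⟩ := ih
      have hex : ∃ c, Phi D k (decF (g D k (x, t))) (x, t) c :=
        stepExists hI hC hIC hq hx hpart ihx ihsel ihgood k
      have hstep : g D (k+1) (x, t) = Nat.find hex := by
        rw [show g D (k+1) (x, t) =
          (if h : ∃ c, Phi D k (decF (g D k (x, t))) (x, t) c then Nat.find h
           else g D k (x, t)) from rfl, dif_pos hex]
      obtain ⟨p1, p2, p3, p4, p5⟩ := Nat.find_spec hex
      rw [hstep]
      exact ⟨p2, p3, p5, fun k' hk' => by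
        have : k' = k := by omega
        subst this
        exact ⟨p1, p4⟩⟩

lemma g_mono (D : ℕ → Set Cantor) (p : Cantor × (ℕ → Cantor)) :
    ∀ k, decF (g D k p) ⊆ decF (g D (k+1) p) := by
  intro k
  by_cases h : ∃ c, Phi D k (decF (g D k p)) p c
  · have : g D (k+1) p = Nat.find h := by
      rw [show g D (k+1) p =
        (if h' : ∃ c, Phi D k (decF (g D k p)) p c then Nat.find h' else g D k p) from rfl,
        dif_pos h]
    rw [this]
    exact (Nat.find_spec h).1
  · have : g D (k+1) p = g D k p := by
      rw [show g D (k+1) p =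
        (if h' : ∃ c, Phi D k (decF (g D k p)) p c then Nat.find h' else g D k p) from rfl,
        dif_neg h]
    rw [this]

lemma g_mono' (D : ℕ → Set Cantor) (p : Cantor × (ℕ → Cantor)) {k k' : ℕ} (h : k ≤ k') :
    decF (g D k p) ⊆ decF (g D k' p) := by
  induction k' with
  | zero => rw [Nat.le_zero.1 h]
  | succ k' ih =>
      by_cases h2 : k ≤ k'
      · exact (ih h2).trans (g_mono D p k')
      · have h3 : k = k' + 1 := by omega
        rw [h3]

lemma toSet_Fn (D : ℕ → Set Cantor) (p : Cantor × (ℕ → Cantor)) :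
    toSet (Fn D p) = ⋃ k, (↑(decF (g D k p)) : Set ℕ) := by
  ext i
  simp [Fn, toSet]

end Core

end QPP


/-- If an `Fσ` ideal on `ℕ` is `q⁺`, then it is uniformly `q⁺`. -/
theorem fsigma_qplus_unif_qplus (I : Set Cantor) (hI : IsIdeal I) (hFs : IsFsigma I)
    (hq : Qplus I) : UnifQplus I := by
  obtain ⟨C, hC, hIC⟩ := hFs
  set D : ℕ → Set Cantor := fun k => Down (C k) with hD
  refine ⟨QPP.Fn D, QPP.meas_Fn D, ?_⟩
  intro x t hx hpart
  have hinv := QPP.invariant hI hC hIC hq hx hpart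
  have hFeq := QPP.toSet_Fn D (x, t)
  refine ⟨?_, ?_, ?_⟩
  · rw [hFeq]
    intro i hi
    obtain ⟨k, hk⟩ := Set.mem_iUnion.1 hi
    exact (hinv k).1 hk
  · intro hmem
    rw [hIC] at hmem
    obtain ⟨m, hm⟩ := Set.mem_iUnion.1 hmem
    have hesc := ((hinv (m+1)).2.2.2 m rfl).2
    apply hesc
    refine QPP.down_hered _ ⟨_, hm, subset_rfl⟩ _ ?_
    rw [QPP.toSet_chi, hFeq]
    exact Set.subset_iUnion (fun k => (↑(QPP.decF (QPP.g D k (x, t))) : Set ℕ)) (m+1)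
  · intro n i hi j hj
    by_contra hij
    rw [hFeq] at hi hj
    obtain ⟨k1, hk1⟩ := Set.mem_iUnion.1 hi.1
    obtain ⟨k2, hk2⟩ := Set.mem_iUnion.1 hj.1
    have hik : i ∈ QPP.decF (QPP.g D (max k1 k2) (x, t)) :=
      QPP.g_mono' D (x, t) (le_max_left k1 k2) hk1
    have hjk : j ∈ QPP.decF (QPP.g D (max k1 k2) (x, t)) :=
      QPP.g_mono' D (x, t) (le_max_right k1 k2) hk2
    exact (hinv (max k1 k2)).2.1 i hik j hjk hij n ⟨hi.2, hj.2⟩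
end

section
/- Let A ⊆ 2^ℕ be an almost disjoint family of infinite subsets of ℕ (i.e. any two distinct members of A have finite intersection) which is closed as a subset of the Cantor space 2^ℕ. Then the ideal I(A) generated by A together with the finite sets — namely, x ∈ I(A) iff x ⊆ s ∪ a₁ ∪ … ∪ a_k for some finite s ⊆ ℕ and a₁,…,a_k ∈ A — is uniformly selective. -/
open Set

/-!
The selector is glued from finite stages. For a decreasing sequence of positive sets `X n`, the
`m`-th stage is a finite `X`-diagonal set (each of its points lies in `X p` for every smaller point
`p` of it) lying above the last point `N` of the previous stage and inside `X N`, which no `m`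
members of `A` cover. Taking each stage to be the first admissible finite set in a fixed
enumeration makes the construction Borel; the union of the stages is diagonal, and it is positive
because its `m`-th piece escapes every `m` members of `A`.

Stages exist by compactness and almost disjointness. If every finite diagonal set above `N` were
covered by `m` members of the closed family `A`, so would be every infinite one. Diagonal
sequences avoiding finitely many members of `A` then show that infinitely many `b ∈ A` meet every
`X k` in an infinite set, and one diagonal set meeting infinitely many such `b` infinitely often
can only be covered by a family that, by almost disjointness, contains all of them.
-/

lemma Set.Infinite.exists_infinite_inter_of_subset_biUnion {α ι : Type*} {s : Set α}
    {F : Finset ι} {t : ι → Set α} (hs : s.Infinite) (h : s ⊆ ⋃ i ∈ F, t i) :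
    ∃ i ∈ F, (s ∩ t i).Infinite := by
  by_contra! hfin
  refine hs ((F.finite_toSet.biUnion fun i hi => hfin i hi).subset fun p hp => ?_)
  obtain ⟨i, hi, hpi⟩ := mem_iUnion₂.1 (h hp)
  exact mem_iUnion₂.2 ⟨i, hi, hp, hpi⟩

lemma Finset.exists_fin_enum_of_card_le {α : Type*} (F : Finset α) {m : ℕ} (hm : F.card ≤ m)
    (a₀ : α) :
    ∃ ab : Fin m → α, ↑F ⊆ Set.range ab ∧ Set.range ab ⊆ insert a₀ (F : Set α) := by
  refine ⟨fun i => F.toList.getD i a₀, fun a ha => ?_, ?_⟩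
  · obtain ⟨k, hk, rfl⟩ := List.mem_iff_getElem.1 (Finset.mem_toList.2 ha)
    have hkm : k < m := (Finset.length_toList F ▸ hk).trans_le hm
    exact ⟨⟨k, hkm⟩, List.getD_eq_getElem _ _ hk⟩
  · rintro _ ⟨i, rfl⟩
    change F.toList.getD i a₀ ∈ _
    rcases lt_or_ge (i : ℕ) F.toList.length with hi | hi
    · rw [List.getD_eq_getElem _ _ hi]
      exact Set.mem_insert_of_mem _ (Finset.mem_toList.1 (List.getElem_mem hi))
    · rw [List.getD_eq_default _ _ hi]
      exact Set.mem_insert a₀ _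

namespace ClosedAD

open Classical in
noncomputable def ofSet (s : Set ℕ) : Cantor := fun p => decide (p ∈ s)

lemma toSet_ofSet (s : Set ℕ) : toSet (ofSet s) = s := by
  ext p
  simp [toSet, ofSet]

lemma measurable_ofSet {Y : Type*} [MeasurableSpace Y] {S : Y → Set ℕ}
    (hS : ∀ p, Measurable fun y => p ∈ S y) : Measurable fun y => ofSet (S y) := by
  refine measurable_pi_iff.2 fun p => measurable_to_bool ?_
  convert (hS p).setOf using 1
  ext
  simp [ofSet]

section Diagonal

variable {X : ℕ → Set ℕ}

def IsDiagonal (X : ℕ → Set ℕ) (s : Set ℕ) : Prop :=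
  ∀ p ∈ s, ∀ q ∈ s, p < q → q ∈ X p

lemma IsDiagonal.mono {s t : Set ℕ} (h : IsDiagonal X s) (hts : t ⊆ s) : IsDiagonal X t :=
  fun p hp q hq => h p (hts hp) q (hts hq)

lemma IsDiagonal.finite_diff (hX : Antitone X) {s : Set ℕ} (h : IsDiagonal X s) (k : ℕ) :
    (s \ X k).Finite := by
  by_cases hk : ∃ p ∈ s, k ≤ p
  · obtain ⟨p, hp, hkp⟩ := hk
    refine (finite_Iic p).subset fun q hq => ?_
    by_contra hqp
    exact hq.2 (hX hkp (h p hp q hq.1 (not_le.1 hqp)))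
  · push Not at hk
    exact (finite_Iio k).subset fun q hq => hk q hq.1

lemma exists_diagonal_seq (hX : Antitone X) (c : ℕ → Set ℕ)
    (hc : ∀ l k, (c l ∩ X k).Infinite) (N : ℕ) :
    ∃ p : ℕ → ℕ, StrictMono p ∧ (∀ l, p l ∈ c l) ∧
      range p ⊆ Ioi N ∩ X N ∧ IsDiagonal X (range p) := by
  choose f hf hlt using fun l k => (hc l k).exists_gt k
  let q : ℕ → ℕ := fun l => Nat.rec N (fun l q => f l q) l
  have hq : StrictMono q := strictMono_nat_of_lt_succ fun l => hlt l (q l)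
  have hstep : ∀ i j, i < j → q j ∈ X (q i) := by
    intro i j hij
    obtain ⟨j, rfl⟩ := Nat.exists_eq_add_one_of_ne_zero (by omega : j ≠ 0)
    exact hX (hq.monotone (by omega)) (hf j (q j)).2
  refine ⟨fun l => q (l + 1), hq.comp (strictMono_id.add_const 1), fun l => (hf l (q l)).1,
    ?_, ?_⟩
  · rintro _ ⟨l, rfl⟩
    exact ⟨hq (Nat.succ_pos l), hstep 0 (l + 1) (Nat.succ_pos l)⟩
  · rintro _ ⟨i, rfl⟩ _ ⟨j, rfl⟩ hij
    exact hstep (i + 1) (j + 1) (hq.lt_iff_lt.1 hij)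

end Diagonal

section Ideal

variable {A : Set Cantor}

def IsAlmostDisjoint (A : Set Cantor) : Prop :=
  ∀ a ∈ A, ∀ b ∈ A, a ≠ b → (toSet a ∩ toSet b).Finite

def adIdeal (A : Set Cantor) : Set Cantor :=
  {x | ∃ (s : Finset ℕ) (l : List Cantor),
    (∀ a ∈ l, a ∈ A) ∧ toSet x ⊆ (s : Set ℕ) ∪ ⋃ a ∈ l, toSet a}

def IsPositive (A : Set Cantor) (c : Set ℕ) : Prop :=
  ∀ F : Finset Cantor, ↑F ⊆ A → (c \ ⋃ a ∈ F, toSet a).Infinite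

def Covered (A : Set Cantor) (m : ℕ) (c : Set ℕ) : Prop :=
  ∃ F : Finset Cantor, F.card ≤ m ∧ ↑F ⊆ A ∧ c ⊆ ⋃ a ∈ F, toSet a

lemma notMem_adIdeal_iff {x : Cantor} : x ∉ adIdeal A ↔ IsPositive A (toSet x) := by
  classical
  constructor
  · intro h F hFA hfin
    refine h ⟨hfin.toFinset, F.toList, fun a ha => hFA (Finset.mem_toList.1 ha), fun p hp => ?_⟩
    by_cases hpF : p ∈ ⋃ a ∈ F, toSet a
    · right; simpa using hpF
    · left; simpa using And.intro hp hpF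
  · rintro h ⟨s, l, hlA, hx⟩
    refine h l.toFinset (fun a ha => hlA a (List.mem_toFinset.1 ha)) (s.finite_toSet.subset ?_)
    rintro p ⟨hp, hpl⟩
    exact (hx hp).resolve_right (by simpa using hpl)

lemma mem_of_infinite_inter (hAD : IsAlmostDisjoint A) {F : Finset Cantor} (hFA : ↑F ⊆ A)
    {z : Set ℕ} (hz : z ⊆ ⋃ a ∈ F, toSet a) {b : Cantor} (hb : b ∈ A)
    (hinf : (z ∩ toSet b).Infinite) : b ∈ F := by
  obtain ⟨a, ha, hab⟩ := hinf.exists_infinite_inter_of_subset_biUnion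
    (inter_subset_left.trans hz)
  obtain rfl : b = a := by
    by_contra hne
    exact hab ((hAD b hb a (hFA ha) hne).subset fun p hp => ⟨hp.1.2, hp.2⟩)
  exact ha

lemma covered_of_forall_finset (hA : IsClosed A) {m : ℕ} {z : Set ℕ}
    (h : ∀ s : Finset ℕ, ↑s ⊆ z → Covered A m ↑s) : Covered A m z := by
  classical
  rcases A.eq_empty_or_nonempty with rfl | ⟨a₀, ha₀⟩
  · refine ⟨∅, by simp, by simp, fun p hp => ?_⟩
    obtain ⟨F, -, hFA, hpF⟩ := h ({p} : Finset ℕ) (by simpa using hp)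
    obtain ⟨a, ha, -⟩ := mem_iUnion₂.1 (hpF (Finset.mem_coe.2 (Finset.mem_singleton_self p)))
    exact (hFA ha).elim
  have hK : IsCompact (univ.pi fun _ : Fin m => A) := (isClosed_set_pi fun _ _ => hA).isCompact
  have hclosed : ∀ p : z, IsClosed {ab : Fin m → Cantor | ∃ i, ab i p = true} := fun p => by
    simp only [ofPred_exists]
    exact isClosed_iUnion_of_finite fun i => isClosed_eq (by fun_prop) continuous_const
  have hfin : ∀ u : Finset z, ((univ.pi fun _ : Fin m => A) ∩
      ⋂ p ∈ u, {ab : Fin m → Cantor | ∃ i, ab i p = true}).Nonempty := by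
    intro u
    obtain ⟨F, hcard, hFA, hF⟩ := h (u.map (Function.Embedding.subtype _)) (by simp)
    obtain ⟨ab, hFab, habF⟩ := F.exists_fin_enum_of_card_le hcard a₀
    refine ⟨ab, fun i _ => insert_subset ha₀ hFA (habF (mem_range_self i)),
      mem_iInter₂.2 fun p hp => ?_⟩
    obtain ⟨a, ha, hpa⟩ := mem_iUnion₂.1 (hF (Finset.mem_coe.2 (Finset.mem_map_of_mem _ hp)))
    obtain ⟨i, rfl⟩ := hFab ha
    exact ⟨i, hpa⟩
  obtain ⟨ab, hab, hz⟩ := hK.inter_iInter_nonempty _ hclosed hfin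
  refine ⟨Finset.univ.image ab, Finset.card_image_le.trans (by simp), ?_, fun p hp => ?_⟩
  · simpa [Set.subset_def] using hab
  · obtain ⟨i, hi⟩ := mem_iInter.1 hz ⟨p, hp⟩
    exact mem_iUnion₂.2 ⟨ab i, by simp, hi⟩

end Ideal

section Stage

variable {A : Set Cantor} {X : ℕ → Set ℕ}

def IsStage (A : Set Cantor) (X : ℕ → Set ℕ) (m N : ℕ) (s : Finset ℕ) : Prop :=
  ↑s ⊆ Ioi N ∩ X N ∧ IsDiagonal X ↑s ∧ ¬ Covered A m ↑s

lemma IsStage.nonempty {m N : ℕ} {s : Finset ℕ} (h : IsStage A X m N s) : s.Nonempty := by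
  rw [Finset.nonempty_iff_ne_empty]
  rintro rfl
  exact h.2.2 ⟨∅, by simp, by simp, by simp⟩

lemma infinite_of_forall_isDiagonal_covered (hX : Antitone X) (hpos : ∀ n, IsPositive A (X n))
    {m N : ℕ} (hcov : ∀ z ⊆ Ioi N ∩ X N, IsDiagonal X z → Covered A m z) :
    {a ∈ A | ∀ k, (toSet a ∩ X k).Infinite}.Infinite := by
  intro hfin
  have hFA : ↑hfin.toFinset ⊆ A := fun a ha => (hfin.mem_toFinset.1 ha).1
  obtain ⟨p, hp, hpc, hpN, hpd⟩ := exists_diagonal_seq hX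
    (fun _ => (⋃ a ∈ hfin.toFinset, toSet a)ᶜ)
    (fun _ k => by rw [inter_comm, ← sdiff_eq]; exact hpos k _ hFA) N
  obtain ⟨F, -, hFA', hzF⟩ := hcov _ hpN hpd
  obtain ⟨a, haF, hinf⟩ :=
    (infinite_range_of_injective hp.injective).exists_infinite_inter_of_subset_biUnion hzF
  have ha : a ∈ {a ∈ A | ∀ k, (toSet a ∩ X k).Infinite} :=
    ⟨hFA' haF, fun k => (hinf.sdiff (hpd.finite_diff hX k)).mono
      fun q hq => ⟨hq.1.2, not_not.1 fun h => hq.2 ⟨hq.1.1, h⟩⟩⟩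
  obtain ⟨_, ⟨l, rfl⟩, hl⟩ := hinf.nonempty
  exact hpc l (mem_biUnion (hfin.mem_toFinset.2 ha) hl)

theorem exists_isStage (hA : IsClosed A) (hAD : IsAlmostDisjoint A) (hX : Antitone X)
    (hpos : ∀ n, IsPositive A (X n)) (m N : ℕ) : ∃ s, IsStage A X m N s := by
  by_contra! H
  have hcov : ∀ z ⊆ Ioi N ∩ X N, IsDiagonal X z → Covered A m z := fun z hz hd =>
    covered_of_forall_finset hA fun s hs =>
      not_not.1 fun hnc => H s ⟨hs.trans hz, hd.mono hs, hnc⟩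
  have hD := infinite_of_forall_isDiagonal_covered hX hpos hcov
  let b : ℕ → Cantor := fun i => hD.natEmbedding _ i
  have hbD : ∀ i, b i ∈ A ∧ ∀ k, (toSet (b i) ∩ X k).Infinite := fun i =>
    (hD.natEmbedding _ i).2
  -- the `l`-th point lies in `b (unpair l).1`, so each `b i` is met infinitely often
  obtain ⟨p, hp, hpc, hpN, hpd⟩ := exists_diagonal_seq hX (fun l => toSet (b l.unpair.1))
    (fun l => (hbD _).2) N
  obtain ⟨F, -, hFA, hzF⟩ := hcov _ hpN hpd
  have hbF : ∀ i, b i ∈ F := fun i => mem_of_infinite_inter hAD hFA hzF (hbD i).1 <|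
    infinite_of_injective_forall_mem (f := fun j => p (Nat.pair i j))
      (fun j j' h => (Nat.pair_eq_pair.1 (hp.injective h)).2)
      fun j => ⟨mem_range_self _, by simpa using hpc (Nat.pair i j)⟩
  have hb : Function.Injective b := Subtype.val_injective.comp (hD.natEmbedding _).injective
  exact (infinite_range_of_injective hb).mono (range_subset_iff.2 hbF) F.finite_toSet

end Stage

section Glue

def threshold (f : ℕ → ℕ → Finset ℕ) : ℕ → ℕ
  | 0 => 0
  | m + 1 => (f m (threshold f m)).sup id

def glue (f : ℕ → ℕ → Finset ℕ) : Set ℕ := ⋃ m, ↑(f m (threshold f m))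

variable {A : Set Cantor} {X : ℕ → Set ℕ} {f : ℕ → ℕ → Finset ℕ}

lemma threshold_lt_of_mem (hf : ∀ m N, IsStage A X m N (f m N)) {m p : ℕ}
    (hp : p ∈ f m (threshold f m)) : threshold f m < p ∧ p ≤ threshold f (m + 1) :=
  ⟨((hf _ _).1 hp).1, Finset.le_sup (f := id) hp⟩

lemma strictMono_threshold (hf : ∀ m N, IsStage A X m N (f m N)) : StrictMono (threshold f) :=
  strictMono_nat_of_lt_succ fun m =>
    let ⟨_, hp⟩ := (hf m (threshold f m)).nonempty
    (threshold_lt_of_mem hf hp).1.trans_le (threshold_lt_of_mem hf hp).2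

lemma isDiagonal_glue (hX : Antitone X) (hf : ∀ m N, IsStage A X m N (f m N)) :
    IsDiagonal X (glue f) := by
  simp only [glue, IsDiagonal, mem_iUnion, Finset.mem_coe]
  rintro p ⟨i, hp⟩ q ⟨j, hq⟩ hpq
  have hmono := (strictMono_threshold hf).monotone
  have hpi := threshold_lt_of_mem hf hp
  have hqj := threshold_lt_of_mem hf hq
  rcases lt_trichotomy i j with hij | rfl | hji
  · exact hX (hpi.2.trans (hmono hij)) ((hf _ _).1 hq).2
  · exact (hf _ _).2.1 p hp q hq hpq
  · have : threshold f (j + 1) ≤ threshold f i := hmono hji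
    omega

lemma isPositive_glue (hf : ∀ m N, IsStage A X m N (f m N)) : IsPositive A (glue f) := by
  intro F hFA
  refine infinite_of_forall_exists_gt fun B => ?_
  set m := max F.card (B + 1)
  obtain ⟨p, hp, hpF⟩ := not_subset.1 fun h => (hf m _).2.2 ⟨F, le_max_left _ _, hFA, h⟩
  refine ⟨p, ⟨mem_iUnion.2 ⟨m, hp⟩, hpF⟩, ?_⟩
  have : m ≤ threshold f m := (strictMono_threshold hf).id_le m
  have := (threshold_lt_of_mem hf hp).1
  have : B + 1 ≤ m := le_max_right _ _
  omega

end Glue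

section Measurability

theorem exists_measurable_choice {Y α : Type*} [MeasurableSpace Y] [MeasurableSpace α]
    [Countable α] [Nonempty α] (P : Y → α → Prop) (hP : ∀ a, MeasurableSet {y | P y a}) :
    ∃ f : Y → α, Measurable f ∧ ∀ y, (∃ a, P y a) → P y (f y) := by
  classical
  obtain ⟨e, he⟩ := exists_surjective_nat α
  have hQ : ∀ y, ∃ n, P y (e n) ∨ ¬ ∃ a, P y a := fun y => by
    by_cases h : ∃ a, P y a
    · obtain ⟨a, ha⟩ := h
      obtain ⟨n, rfl⟩ := he a
      exact ⟨n, .inl ha⟩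
    · exact ⟨0, .inr h⟩
  refine ⟨fun y => e (Nat.find (hQ y)), measurable_from_nat.comp (measurable_find hQ fun n => ?_),
    fun y hy => (Nat.find_spec (hQ y)).resolve_right (not_not.2 hy)⟩
  exact measurableSet_setOfPred.2 <| (measurableSet_setOfPred.1 (hP _)).or
    (Measurable.exists fun a => measurableSet_setOfPred.1 (hP a)).not

lemma measurableSet_isStage (A : Set Cantor) (m N : ℕ) (s : Finset ℕ) :
    MeasurableSet {xs : ℕ → Cantor | IsStage A (fun n => toSet (xs n)) m N s} := by
  have hmem : ∀ p q, Measurable fun xs : ℕ → Cantor => q ∈ toSet (xs p) := fun p q =>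
    (measurable_of_countable fun b : Bool => b = true).comp
      ((measurable_pi_apply q).comp (measurable_pi_apply p))
  simp only [IsStage, IsDiagonal, subset_def, mem_inter_iff, mem_Ioi]
  exact measurableSet_setOfPred.2 <|
    (Measurable.forall fun p => measurable_const.imp (measurable_const.and (hmem N p))).and <|
      (Measurable.forall fun p => measurable_const.imp <| Measurable.forall fun q =>
        measurable_const.imp (measurable_const.imp (hmem p q))).and measurable_const

variable {Y : Type*} [MeasurableSpace Y] {f : ℕ → ℕ → Y → Finset ℕ}

lemma measurable_of_nat_index {β : Type*} [MeasurableSpace β] {g : ℕ → Y → β}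
    (hg : ∀ n, Measurable (g n)) {h : Y → ℕ} (hh : Measurable h) :
    Measurable fun y => g (h y) y :=
  (measurable_from_prod_countable_left (f := fun q : Y × ℕ => g q.2 q.1) hg).comp
    (measurable_id.prodMk hh)

lemma measurable_threshold (hf : ∀ m N, Measurable (f m N)) (m : ℕ) :
    Measurable fun y => threshold (fun m N => f m N y) m := by
  induction m with
  | zero => exact measurable_const
  | succ m ih =>
    exact measurable_of_nat_index
      (fun N => (measurable_of_countable fun s : Finset ℕ => s.sup id).comp (hf m N)) ih

lemma measurable_mem_glue (hf : ∀ m N, Measurable (f m N)) (p : ℕ) :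
    Measurable fun y => p ∈ glue fun m N => f m N y := by
  simp only [glue, mem_iUnion, Finset.mem_coe]
  exact .exists fun m => (measurable_finset_mem p).comp
    (measurable_of_nat_index (hf m) (measurable_threshold hf m))

end Measurability

end ClosedAD

open ClosedAD

theorem closed_ad_unif_selective_general (A : Set Cantor) (hclosed : IsClosed A)
    (hAD : ∀ a ∈ A, ∀ b ∈ A, a ≠ b → (toSet a ∩ toSet b).Finite) :
    UnifSelective {x : Cantor | ∃ (s : Finset ℕ) (l : List Cantor),
      (∀ a ∈ l, a ∈ A) ∧ toSet x ⊆ (s : Set ℕ) ∪ ⋃ a ∈ l, toSet a} := by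
  choose f hf_meas hf_spec using fun m N => exists_measurable_choice
    (fun (xs : ℕ → Cantor) s => IsStage A (fun n => toSet (xs n)) m N s)
    (measurableSet_isStage A m N)
  refine ⟨fun xs => ofSet (glue fun m N => f m N xs),
    measurable_ofSet (measurable_mem_glue hf_meas), fun xs hxs hdec => ?_⟩
  have hX : Antitone fun n => toSet (xs n) := antitone_nat_of_succ_le hdec
  have hstage : ∀ m N, IsStage A (fun n => toSet (xs n)) m N (f m N xs) := fun m N =>
    hf_spec m N xs (exists_isStage hclosed hAD hX (fun n => notMem_adIdeal_iff.1 (hxs n)) m N)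
  refine ⟨notMem_adIdeal_iff.2 ?_, fun n hn q hq => ?_⟩
  · simpa only [toSet_ofSet] using isPositive_glue hstage
  · simp only [toSet_ofSet] at hn hq
    exact isDiagonal_glue hX hstage n hn q hq.1 (not_le.1 hq.2)

/-- For a closed almost disjoint family `A` of infinite subsets of `ℕ`, the ideal
generated by `A` together with the finite sets is uniformly selective. -/
theorem closed_ad_unif_selective (A : Set Cantor) (hclosed : IsClosed A)
    (hinf : ∀ a ∈ A, (toSet a).Infinite)
    (hAD : ∀ a ∈ A, ∀ b ∈ A, a ≠ b → (toSet a ∩ toSet b).Finite) :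
    UnifSelective {x : Cantor | ∃ (s : Finset ℕ) (l : List Cantor),
      (∀ a ∈ l, a ∈ A) ∧ toSet x ⊆ (s : Set ℕ) ∪ ⋃ a ∈ l, toSet a} :=
  closed_ad_unif_selective_general A hclosed hAD
end

section
/- Galvin's lemma has no uniform version: there is a family F of finite subsets of ℕ such that no Borel function S : 2^ℕ → 2^ℕ satisfies, for every infinite x ⊆ ℕ, that S(x) ⊆ x, S(x) is infinite, and S(x) is F-homogeneous. -/
open Set

/-!
Code `a : Cantor` by the set `prefixCodes a` of binary codes of its finite prefixes, and call
`a` self-reading if for some `w : ℕ → ℕ` it has a `1` at the position coding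
`(a ↾ j, w ↾ j)` for every `j`. Diagonalizing against the normal form of analytic sets shows
that the self-reading points do not form a Borel set.

A finite set `s` of prefix codes is in `galvinFamily` when the longest prefix coded in `s`
contains no readable witness of length `#s` whose `i`-th entry is bounded by the `i`-th element
of `s`. If `a` is not self-reading, every infinite subset of `prefixCodes a` contains a member of
the family: otherwise the bounded witnesses form an infinite finitely branching tree, and a
branch of it makes `a` self-reading. If `a` is self-reading with witness `w`, every infinite
subset of `prefixCodes a` has an infinite subset, sparse enough for `w` to be readable below each
of its elements, none of whose initial segments is in the family. Hence for a Borel `S` as in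
the statement, `S (prefixCodes a)` contains a member of the family iff `a` is not self-reading,
which would make the self-reading points a Borel set.
-/

open Filter Topology MeasureTheory Encodable
open scoped Finset

namespace GalvinCounterexample

section PrefixList

variable {α : Type*}

def prefixList (x : ℕ → α) (n : ℕ) : List α := List.ofFn fun i : Fin n => x i

@[simp] lemma length_prefixList (x : ℕ → α) (n : ℕ) : (prefixList x n).length = n :=
  List.length_ofFn

lemma prefixList_succ (x : ℕ → α) (n : ℕ) : prefixList x (n + 1) = prefixList x n ++ [x n] := by
  rw [prefixList, List.ofFn_succ', List.concat_eq_append]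
  rfl

lemma take_prefixList (x : ℕ → α) {j n : ℕ} (h : j ≤ n) :
    (prefixList x n).take j = prefixList x j :=
  List.ext_getElem (by simp [h]) fun i _ _ => by simp [prefixList]

lemma getD_prefixList_eq_true_iff (x : ℕ → Bool) {n p : ℕ} :
    (prefixList x n).getD p false = true ↔ p < n ∧ x p = true := by
  by_cases hp : p < n
  · simp [prefixList, hp]
  · rw [List.getD_eq_default _ _ (by rw [length_prefixList]; omega)]
    simp [hp]

lemma prefixList_eq_prefixList_iff {x y : ℕ → α} {n : ℕ} :
    prefixList x n = prefixList y n ↔ ∀ i < n, x i = y i := by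
  simp [prefixList, List.ofFn_inj, funext_iff, Fin.forall_iff]

lemma tendsto_of_prefixList_eq [TopologicalSpace α] {v : ℕ → ℕ → α} {w : ℕ → α}
    (h : ∀ k, prefixList (v k) k = prefixList w k) : Tendsto v atTop (𝓝 w) := by
  refine tendsto_pi_nhds.2 fun i => tendsto_const_nhds.congr' ?_
  filter_upwards [eventually_gt_atTop i] with k hk
  exact (prefixList_eq_prefixList_iff.1 (h k) i hk).symm

lemma isClopen_setOf_prefixList [TopologicalSpace α] [DiscreteTopology α] (n : ℕ)
    (P : List α → Prop) : IsClopen {x : ℕ → α | P (prefixList x n)} :=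
  (isClopen_discrete {v : Fin n → α | P (List.ofFn v)}).preimage
    (continuous_pi fun i => continuous_apply (i : ℕ))

lemma measurableSet_setOf_prefixList [MeasurableSpace α] [Countable α]
    [MeasurableSingletonClass α] (n : ℕ) (P : List α → Prop) :
    MeasurableSet {x : ℕ → α | P (prefixList x n)} :=
  (measurable_pi_lambda (fun (x : ℕ → α) (i : Fin n) => x i) fun i => measurable_pi_apply (i : ℕ))
    (to_countable {v : Fin n → α | P (List.ofFn v)}).measurableSet

end PrefixList

/-- König's lemma, in the form of compactness of `∏ i, [0, b i]`. -/
lemma exists_forall_prefixList_of_bounded {P : ℕ → List ℕ → Prop} (b : ℕ → ℕ)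
    (h : ∀ k, ∃ u : ℕ → ℕ, (∀ i < k, u i ≤ b i) ∧ ∀ j ≤ k, P j (prefixList u j)) :
    ∃ w : ℕ → ℕ, ∀ j, P j (prefixList w j) := by
  let K : Set (ℕ → ℕ) := univ.pi fun i => Iic (b i)
  let C : ℕ → Set (ℕ → ℕ) := fun k => ⋂ j ≤ k, {u | P j (prefixList u j)}
  let t : ℕ → Set (ℕ → ℕ) := fun k => K ∩ C k
  have hK : IsCompact K := isCompact_univ_pi fun i => (finite_Iic _).isCompact
  have hC : ∀ k, IsClosed (C k) := fun k =>
    isClosed_biInter fun j _ => (isClopen_setOf_prefixList j (P j)).isClosed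
  have ht : ∀ k, IsClosed (t k) := fun k => hK.isClosed.inter (hC k)
  have hne : ∀ k, (t k).Nonempty := by
    intro k
    obtain ⟨u, hub, hu⟩ := h k
    have hprefix : ∀ j ≤ k, prefixList (fun i => min (u i) (b i)) j = prefixList u j :=
      fun j hj => prefixList_eq_prefixList_iff.2 fun i hi => min_eq_left (hub i (by omega))
    refine ⟨fun i => min (u i) (b i), fun i _ => mem_Iic.2 (min_le_right _ _),
      mem_iInter₂.2 fun j hj => ?_⟩
    simpa only [mem_ofPred_eq, hprefix j hj] using hu j hj
  obtain ⟨w, hw⟩ := IsCompact.nonempty_iInter_of_sequence_nonempty_isCompact_isClosed t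
    (fun k => inter_subset_inter_right _ fun u hu =>
      mem_iInter₂.2 fun j hj => mem_iInter₂.1 hu j (by omega)) hne (hK.inter_right (hC 0)) ht
  exact ⟨w, fun j => mem_iInter₂.1 (mem_iInter.1 hw j).2 j le_rfl⟩

/-- The binary numeral `1σ`. -/
def binCode (σ : List Bool) : ℕ := σ.foldl (fun n b => 2 * n + b.toNat) 1

@[simp] lemma binCode_nil : binCode [] = 1 := rfl

lemma binCode_append_singleton (σ : List Bool) (b : Bool) :
    binCode (σ ++ [b]) = 2 * binCode σ + b.toNat := by
  simp [binCode]

lemma length_lt_binCode (σ : List Bool) : σ.length < binCode σ := by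
  induction σ using List.reverseRecOn with
  | nil => simp
  | append_singleton σ b ih =>
    simp only [binCode_append_singleton, List.length_append, List.length_singleton]
    omega

lemma binCode_injective : Function.Injective binCode := by
  intro σ
  induction σ using List.reverseRecOn with
  | nil =>
    rintro τ h
    rcases List.eq_nil_or_concat τ with rfl | ⟨τ, c, rfl⟩
    · rfl
    · have := length_lt_binCode τ
      simp only [binCode_nil, List.concat_eq_append, binCode_append_singleton] at h
      omega
  | append_singleton σ b ih =>
    rintro τ h
    rcases List.eq_nil_or_concat τ with rfl | ⟨τ, c, rfl⟩
    · have := length_lt_binCode σ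
      simp only [binCode_nil, binCode_append_singleton] at h
      omega
    · simp only [List.concat_eq_append, binCode_append_singleton] at h ⊢
      obtain rfl : b = c := by cases b <;> cases c <;> simp at h ⊢ <;> omega
      rw [ih (a₂ := τ) (by omega)]

lemma strictMono_binCode_prefixList (a : ℕ → Bool) :
    StrictMono fun n => binCode (prefixList a n) :=
  strictMono_nat_of_lt_succ fun n => by
    have := length_lt_binCode (prefixList a n)
    simp only [prefixList_succ, binCode_append_singleton]
    omega

open Classical in
noncomputable def prefixCodes (a : Cantor) : Cantor :=
  fun m => decide (∃ n, binCode (prefixList a n) = m)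

lemma toSet_prefixCodes (a : Cantor) :
    toSet (prefixCodes a) = range fun n => binCode (prefixList a n) := by
  ext m
  simp [toSet, prefixCodes]

lemma infinite_toSet_prefixCodes (a : Cantor) : (toSet (prefixCodes a)).Infinite :=
  toSet_prefixCodes a ▸ infinite_range_of_injective (strictMono_binCode_prefixList a).injective

lemma measurable_prefixCodes : Measurable prefixCodes := by
  refine measurable_pi_lambda _ fun m => measurable_to_bool ?_
  have : (fun a => prefixCodes a m) ⁻¹' {true} = ⋃ n, {a | binCode (prefixList a n) = m} := by
    ext a
    simp [prefixCodes]
  rw [this]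
  exact .iUnion fun n => measurableSet_setOf_prefixList n (binCode · = m)

lemma exists_strictMono_levels {a : Cantor} {Y : Set ℕ} (hY : Y ⊆ toSet (prefixCodes a))
    (hinf : Y.Infinite) (c : ℕ → ℕ) :
    ∃ f : ℕ → ℕ, StrictMono f ∧ ∀ i, c i < f i ∧ binCode (prefixList a (f i)) ∈ Y := by
  have hlevels : {n | binCode (prefixList a n) ∈ Y}.Infinite := fun hfin =>
    hinf <| (hfin.image _).subset fun m hm => by
      obtain ⟨n, rfl⟩ := toSet_prefixCodes a ▸ hY hm
      exact ⟨n, hm, rfl⟩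
  exact extraction_forall_of_frequently fun i =>
    (eventually_gt_atTop (c i)).and_frequently (Nat.frequently_atTop_iff_infinite.2 hlevels)

def selfReading : Set Cantor :=
  {a | ∃ w : ℕ → ℕ, ∀ j, a (encode (prefixList a j, prefixList w j)) = true}

lemma exists_eq_setOf_prefixList_of_analyticSet {C : Set Cantor} (hC : AnalyticSet C) :
    ∃ Q : List Bool → List ℕ → Prop,
      C = {a | ∃ w : ℕ → ℕ, ∀ k, Q (prefixList a k) (prefixList w k)} := by
  rw [AnalyticSet] at hC
  rcases hC with rfl | ⟨f, hf, rfl⟩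
  · exact ⟨fun _ _ => False, by simp⟩
  refine ⟨fun σ u => ∃ v, prefixList v u.length = u ∧ prefixList (f v) σ.length = σ, ?_⟩
  ext a
  simp only [mem_range, mem_ofPred_eq, length_prefixList]
  constructor
  · rintro ⟨w, rfl⟩
    exact ⟨w, fun k => ⟨w, rfl, rfl⟩⟩
  · rintro ⟨w, hw⟩
    choose v hvw hva using hw
    exact ⟨w, tendsto_nhds_unique ((hf.tendsto w).comp (tendsto_of_prefixList_eq hvw))
      (tendsto_of_prefixList_eq hva)⟩

lemma not_measurableSet_selfReading : ¬ MeasurableSet selfReading := by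
  intro hmeas
  have : PolishSpace Cantor := { }
  obtain ⟨Q, hQ⟩ := exists_eq_setOf_prefixList_of_analyticSet hmeas.compl.analyticSet
  classical
  -- the diagonal point answers the query coded by `(σ, u)` with `Q σ u`
  let a : Cantor := fun m => decide (∃ p : List Bool × List ℕ, encode p = m ∧ Q p.1 p.2)
  have ha : ∀ σ u, a (encode (σ, u)) = true ↔ Q σ u := by
    simp [a, encode_injective.eq_iff]
  have hmem : a ∈ selfReading ↔ ∃ w : ℕ → ℕ, ∀ k, Q (prefixList a k) (prefixList w k) := by
    simp only [selfReading, mem_ofPred_eq, ha]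
  have hnmem : a ∈ selfReadingᶜ ↔ ∃ w : ℕ → ℕ, ∀ k, Q (prefixList a k) (prefixList w k) := by
    rw [hQ]
    rfl
  exact iff_not_self (hmem.trans hnmem.symm)

lemma card_filter_lt_image_range {g : ℕ → ℕ} (hg : StrictMono g) {i k : ℕ} (hi : i < k) :
    #{x ∈ (Finset.range k).image g | x < g i} = i := by
  have : {x ∈ (Finset.range k).image g | x < g i} = (Finset.range i).image g := by
    ext x
    simp only [Finset.mem_filter, Finset.mem_image, Finset.mem_range]
    constructor
    · rintro ⟨⟨j, -, rfl⟩, hj⟩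
      exact ⟨j, hg.lt_iff_lt.1 hj, rfl⟩
    · rintro ⟨j, hj, rfl⟩
      exact ⟨⟨j, by omega, rfl⟩, hg hj⟩
  rw [this, Finset.card_image_of_injective _ hg.injective, Finset.card_range]

lemma isGreatest_image_range {g : ℕ → ℕ} (hg : Monotone g) (k : ℕ) :
    IsGreatest ↑((Finset.range (k + 1)).image g) (g k) := by
  simp only [Finset.coe_image, Finset.coe_range]
  exact ⟨mem_image_of_mem g (by simp), forall_mem_image.2 fun i hi => hg (by simp at hi; omega)⟩

lemma exists_range_inter_Iic_eq_image_range {g : ℕ → ℕ} (hg : StrictMono g) (q : ℕ) :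
    ∃ k, range g ∩ Iic q = ↑((Finset.range k).image g) := by
  have hex : ∃ i, q < g i := ⟨q + 1, Nat.lt_of_lt_of_le q.lt_succ_self hg.le_apply⟩
  have hk : ∀ i, g i ≤ q ↔ i < Nat.find hex := fun i =>
    ⟨fun h => lt_of_not_ge fun hi => (Nat.find_spec hex).not_ge ((hg.monotone hi).trans h),
      fun h => not_lt.1 (Nat.find_min hex h)⟩
  refine ⟨Nat.find hex, ?_⟩
  ext x
  simp only [mem_inter_iff, mem_range, mem_Iic, Finset.coe_image, Finset.coe_range, mem_image,
    mem_Iio]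
  constructor
  · rintro ⟨⟨i, rfl⟩, hi⟩
    exact ⟨i, (hk i).1 hi, rfl⟩
  · rintro ⟨i, hi, rfl⟩
    exact ⟨⟨i, rfl⟩, (hk i).2 hi⟩

-- `σ.getD p false = true` says that `p < σ.length` and bit `p` of `σ` is set.
def ReadsOff (σ : List Bool) (u : ℕ → ℕ) (k : ℕ) : Prop :=
  ∀ j < k, σ.getD (encode (σ.take j, prefixList u j)) false = true

lemma readsOff_prefixList_iff {a : Cantor} {u : ℕ → ℕ} {n k : ℕ} (hk : k ≤ n + 1) :
    ReadsOff (prefixList a n) u k ↔ ∀ j < k,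
      encode (prefixList a j, prefixList u j) < n ∧
        a (encode (prefixList a j, prefixList u j)) = true := by
  refine forall₂_congr fun j hj => ?_
  rw [take_prefixList a (by omega), getD_prefixList_eq_true_iff]

/-- `#{x ∈ s | x < m}` is the position of `m` in `s`, so the bound compares the `i`-th entry of
the witness with the `i`-th element of `s`. -/
def galvinFamily : Set (Finset ℕ) :=
  {s | ∃ σ : List Bool, IsGreatest ↑s (binCode σ) ∧
    ¬ ∃ u : ℕ → ℕ, ReadsOff σ u #s ∧ ∀ m ∈ s, u #{x ∈ s | x < m} ≤ m}

lemma exists_mem_galvinFamily_subset {a : Cantor} (ha : a ∉ selfReading) {Y : Set ℕ}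
    (hY : Y ⊆ toSet (prefixCodes a)) (hinf : Y.Infinite) :
    ∃ s ∈ galvinFamily, ↑s ⊆ Y := by
  by_contra! hnone
  obtain ⟨f, hf, hfY⟩ := exists_strictMono_levels hY hinf 0
  set g := fun i => binCode (prefixList a (f i))
  have hg : StrictMono g := (strictMono_binCode_prefixList a).comp hf
  have hwitness : ∀ k, ∃ u : ℕ → ℕ, (∀ i < k, u i ≤ g i) ∧
      ∀ j ≤ k, a (encode (prefixList a j, prefixList u j)) = true := by
    intro k
    set s := (Finset.range (k + 1)).image g with hs
    have hsY : ↑s ⊆ Y := by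
      rw [Finset.coe_image]
      exact image_subset_iff.2 fun i _ => (hfY i).2
    obtain ⟨u, hread, hbound⟩ : ∃ u : ℕ → ℕ,
        ReadsOff (prefixList a (f k)) u #s ∧ ∀ m ∈ s, u #{x ∈ s | x < m} ≤ m :=
      by_contra fun hu => hnone s ⟨_, isGreatest_image_range hg.monotone k, hu⟩ hsY
    rw [Finset.card_image_of_injective _ hg.injective, Finset.card_range,
      readsOff_prefixList_iff (Nat.succ_le_succ (hf.le_apply (x := k)))] at hread
    refine ⟨u, fun i hi => ?_, fun j hj => (hread j (by omega)).2⟩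
    have := hbound (g i) (Finset.mem_image_of_mem g (Finset.mem_range.2 (by omega)))
    rwa [hs, card_filter_lt_image_range hg (show i < k + 1 by omega)] at this
  exact ha (exists_forall_prefixList_of_bounded
    (P := fun j l => a (encode (prefixList a j, l)) = true) g hwitness)

lemma exists_infinite_subset_forall_not_initSeg {a : Cantor} (ha : a ∈ selfReading)
    {Y : Set ℕ} (hY : Y ⊆ toSet (prefixCodes a)) (hinf : Y.Infinite) :
    ∃ z ⊆ Y, z.Infinite ∧ ∀ s ∈ galvinFamily, ¬ InitSeg s z := by
  obtain ⟨w, hw⟩ := ha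
  obtain ⟨f, hf, hfY⟩ :=
    exists_strictMono_levels hY hinf fun i => w i + encode (prefixList a i, prefixList w i)
  set g := fun i => binCode (prefixList a (f i))
  have hg : StrictMono g := (strictMono_binCode_prefixList a).comp hf
  refine ⟨range g, range_subset_iff.2 fun i => (hfY i).2, infinite_range_of_injective hg.injective,
    ?_⟩
  rintro s ⟨σ, hσ, hnone⟩ ⟨q, hq⟩
  obtain ⟨k, hk⟩ := exists_range_inter_Iic_eq_image_range hg q
  obtain rfl : s = (Finset.range k).image g := Finset.coe_injective (hq.trans hk)
  obtain ⟨k, rfl⟩ : ∃ k', k = k' + 1 := Nat.exists_eq_add_one.2 <| Nat.pos_of_ne_zero <| by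
    rintro rfl
    simpa using hσ.1
  obtain rfl : σ = prefixList a (f k) :=
    binCode_injective (hσ.unique (isGreatest_image_range hg.monotone k))
  refine hnone ⟨w, ?_, fun m hm => ?_⟩
  · rw [Finset.card_image_of_injective _ hg.injective, Finset.card_range,
      readsOff_prefixList_iff (Nat.succ_le_succ (hf.le_apply (x := k)))]
    intro j hj
    have := (hfY j).1
    have := hf.monotone (show j ≤ k by omega)
    exact ⟨by omega, hw j⟩
  · obtain ⟨i, hi, rfl⟩ := Finset.mem_image.1 hm
    rw [card_filter_lt_image_range hg (Finset.mem_range.1 hi)]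
    show w i ≤ binCode (prefixList a (f i))
    have := (hfY i).1
    have := length_lt_binCode (prefixList a (f i))
    simp only [length_prefixList] at this
    omega

lemma exists_mem_galvinFamily_subset_iff {a : Cantor} {Y : Set ℕ}
    (hY : Y ⊆ toSet (prefixCodes a)) (hinf : Y.Infinite) (hhom : Homog galvinFamily Y) :
    (∃ s ∈ galvinFamily, ↑s ⊆ Y) ↔ a ∉ selfReading := by
  refine ⟨fun ⟨s, hs, hsY⟩ ha => ?_, fun ha => exists_mem_galvinFamily_subset ha hY hinf⟩
  obtain ⟨z, hzY, hzinf, hz⟩ := exists_infinite_subset_forall_not_initSeg ha hY hinf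
  rcases hhom with hall | hnone
  · obtain ⟨t, ht, htz⟩ := hall z hzY hzinf
    exact hz t ht htz
  · exact hnone s hsY hs

lemma measurableSet_setOf_exists_subset (F : Set (Finset ℕ)) :
    MeasurableSet {x : Cantor | ∃ s ∈ F, ↑s ⊆ toSet x} := by
  have : {x : Cantor | ∃ s ∈ F, ↑s ⊆ toSet x} =
      ⋃ s ∈ F, ⋂ m ∈ s, (fun x : Cantor => x m) ⁻¹' {true} := by
    ext x
    simp [toSet, subset_def]
  rw [this]
  exact .biUnion (to_countable F) fun s _ =>
    .biInter s.countable_toSet fun m _ => measurable_pi_apply m (measurableSet_singleton true)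

end GalvinCounterexample

open GalvinCounterexample

/-- Galvin's lemma has no uniform version: there is a family `F` of finite subsets of `ℕ`
such that no Borel function `S : 2^ℕ → 2^ℕ` produces, for every infinite `x`, an infinite
`F`-homogeneous subset `S(x) ⊆ x`. -/
theorem no_uniform_galvin :
    ∃ F : Set (Finset ℕ),
      ¬ ∃ S : Cantor → Cantor, Measurable S ∧
        ∀ x : Cantor, (toSet x).Infinite →
          toSet (S x) ⊆ toSet x ∧ (toSet (S x)).Infinite ∧ Homog F (toSet (S x)) := by
  refine ⟨galvinFamily, fun ⟨S, hS, hSx⟩ => not_measurableSet_selfReading ?_⟩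
  have hpre : (S ∘ prefixCodes) ⁻¹' {x | ∃ s ∈ galvinFamily, ↑s ⊆ toSet x} = selfReadingᶜ := by
    ext a
    obtain ⟨hsub, hinf, hhom⟩ := hSx _ (infinite_toSet_prefixCodes a)
    exact exists_mem_galvinFamily_subset_iff hsub hinf hhom
  have hmeas := (hS.comp measurable_prefixCodes) (measurableSet_setOf_exists_subset galvinFamily)
  rwa [hpre, MeasurableSet.compl_iff] at hmeas
end

section
/- For every family K ⊆ 2^ℕ that is closed (in the Cantor space), hereditary (closed under taking subsets) and tall, there is a family F of finite subsets of ℕ such that an infinite set y ⊆ ℕ is F-homogeneous if and only if y ∈ K; moreover, every infinite F-homogeneous y satisfies that no finite subset of y belongs to F. -/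
open Set

/-- Every closed, hereditary and tall family `K ⊆ 2^ℕ` is of the form `hom(F)`:
there is a family `F` of finite subsets of `ℕ` such that an infinite `y` is
`F`-homogeneous iff `y ∈ K`, and moreover every infinite `F`-homogeneous `y`
has no finite subset in `F`. -/
theorem closed_hereditary_tall_is_hom (K : Set Cantor) (hclosed : IsClosed K)
    (hhered : Hereditary K) (htall : Tall K) :
    ∃ F : Set (Finset ℕ),
      (∀ y : Cantor, (toSet y).Infinite → (Homog F (toSet y) ↔ y ∈ K)) ∧
      (∀ y : Cantor, (toSet y).Infinite → Homog F (toSet y) →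
        ∀ s : Finset ℕ, (s : Set ℕ) ⊆ toSet y → s ∉ F) := by
  classical
  set F : Set (Finset ℕ) := {s | (fun n => decide (n ∈ s) : Cantor) ∉ K} with hF
  have toSet_chi : ∀ s : Finset ℕ, toSet (fun n => decide (n ∈ s)) = ↑s := by
    intro s; ext n; simp [toSet]
  have key : ∀ y : Cantor, (toSet y).Infinite →
      (∀ z : Set ℕ, z ⊆ toSet y → z.Infinite → ∃ s ∈ F, InitSeg s z) → False := by
    intro y hy hall
    obtain ⟨w, hwK, hwi, hws⟩ := htall y hy
    obtain ⟨s, hsF, n, hseg⟩ := hall (toSet w) hws hwi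
    have hsub : (s : Set ℕ) ⊆ toSet w := by rw [hseg]; exact Set.inter_subset_left
    exact hsF (hhered w hwK _ (by rw [toSet_chi]; exact hsub))
  have mem_of_fin : ∀ y : Cantor,
      (∀ s : Finset ℕ, (s : Set ℕ) ⊆ toSet y → (fun n => decide (n ∈ s) : Cantor) ∈ K) →
      y ∈ K := by
    intro y h
    set z : ℕ → Cantor := fun n m => y m && decide (m ≤ n) with hz
    have hzK : ∀ n, z n ∈ K := by
      intro n
      have hfin : (toSet y ∩ Set.Iic n).Finite :=
        Set.Finite.inter_of_right (Set.finite_Iic n) _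
      have heq : z n = (fun m => decide (m ∈ hfin.toFinset) : Cantor) := by
        funext m
        rw [Bool.eq_iff_iff]
        simp [z, toSet, Set.mem_Iic]
      rw [heq]
      apply h
      intro m hm
      simp only [Set.Finite.coe_toFinset] at hm
      exact hm.1
    have htend : Filter.Tendsto z Filter.atTop (nhds y) := by
      rw [tendsto_pi_nhds]
      intro m
      apply Filter.Tendsto.congr' _ tendsto_const_nhds
      filter_upwards [Filter.eventually_ge_atTop m] with n hn
      simp [z, hn]
    exact hclosed.mem_of_tendsto htend (Filter.Eventually.of_forall hzK)
  have hmain : ∀ y : Cantor, (toSet y).Infinite → Homog F (toSet y) → y ∈ K := by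
    intro y hy hhom
    rcases hhom with h1 | h2
    · exact absurd h1 (fun h => key y hy h)
    · apply mem_of_fin y
      intro s hs
      by_contra hc
      exact h2 s hs hc
  refine ⟨F, ?_, ?_⟩
  · intro y hy
    constructor
    · exact hmain y hy
    · intro hyK
      right
      intro s hs hsF
      exact hsF (hhered y hyK _ (by rw [toSet_chi]; exact hs))
  · intro y hy hhom s hs hsF
    have hyK := hmain y hy hhom
    exact hsF (hhered y hyK _ (by rw [toSet_chi]; exact hs))
end
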